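/- arXiv:1805.03839 — 7 statements merged into one kernel-verified Lean document; each statement's English description precedes it below -/
import Mathlib

section
/- The inverse Fisher information for the spectral projector satisfies the identity 2 Σ_{s≠r} (P_s ⊗ P_r + P_r ⊗ P_s) · λ_r λ_s / (λ_r − λ_s)^2 = 2(Σ C_r^2 ⊗ P_r Σ + Σ P_r ⊗ C_r^2 Σ), where the Kronecker product acts on matrices by (A ⊗ B)C = A C B^T. -/
/-! Σ and C_r are linear combinations of the orthogonal idempotents P_s, and such combinations
multiply coefficientwise. Hence Σ C_r² = C_r² Σ = ∑_{s≠r} λ_s/(λ_r-λ_s)² P_s and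
P_r Σ = Σ P_r = λ_r P_r, and expanding the Kronecker actions matches the left-hand side
term by term. -/

open Matrix Finset

namespace OrthogonalIdempotents

variable {R A ι : Type*} [CommSemiring R] [Semiring A] [Module R A] [DecidableEq ι] {e : ι → A}

theorem sum_smul_mul [IsScalarTower R A A] (he : OrthogonalIdempotents e) (T : Finset ι)
    (a : ι → R) (t : ι) :
    (∑ s ∈ T, a s • e s) * e t = if t ∈ T then a t • e t else 0 := by
  simp only [sum_mul, smul_mul_assoc, he.mul_eq, smul_ite, smul_zero, sum_ite_eq']

theorem mul_sum_smul [SMulCommClass R A A] (he : OrthogonalIdempotents e) (T : Finset ι)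
    (a : ι → R) (t : ι) :
    e t * (∑ s ∈ T, a s • e s) = if t ∈ T then a t • e t else 0 := by
  simp only [mul_sum, mul_smul_comm, he.mul_eq, smul_ite, smul_zero, sum_ite_eq]

theorem sum_smul_mul_sum_smul [IsScalarTower R A A] [SMulCommClass R A A]
    (he : OrthogonalIdempotents e) (T U : Finset ι) (a b : ι → R) :
    (∑ s ∈ T, a s • e s) * (∑ s ∈ U, b s • e s) = ∑ s ∈ U ∩ T, (a s * b s) • e s := by
  simp only [mul_sum, mul_smul_comm, he.sum_smul_mul, smul_ite, smul_zero, smul_smul,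
    mul_comm (b _), sum_ite_mem]

end OrthogonalIdempotents

theorem inverse_fisher_information_identity_general {p K : ℕ}
    (lam : Fin K → ℝ) (P : Fin K → Matrix (Fin p) (Fin p) ℝ)
    (S : Matrix (Fin p) (Fin p) ℝ)
    (hS : S = ∑ s, lam s • P s)
    (hPidem : ∀ s, P s * P s = P s)
    (hPorth : ∀ s t, s ≠ t → P s * P t = 0)
    (r : Fin K)
    (Cr : Matrix (Fin p) (Fin p) ℝ)
    (hCr : Cr = ∑ s ∈ Finset.univ.erase r, (lam r - lam s)⁻¹ • P s) :
    ∀ C : Matrix (Fin p) (Fin p) ℝ,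
      (2 : ℝ) • (∑ s ∈ Finset.univ.erase r,
          (lam r * lam s / (lam r - lam s) ^ 2) • (P s * C * (P r)ᵀ + P r * C * (P s)ᵀ))
        = (2 : ℝ) • ((S * Cr ^ 2) * C * (P r * S)ᵀ + (S * P r) * C * ((Cr ^ 2) * S)ᵀ) := by
  intro C
  have hP : OrthogonalIdempotents P := ⟨hPidem, fun s t hst => hPorth s t hst⟩
  have hCr2 : Cr ^ 2 = ∑ s ∈ univ.erase r, ((lam r - lam s) ^ 2)⁻¹ • P s := by
    rw [sq, hCr, hP.sum_smul_mul_sum_smul, inter_self]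
    simp only [← sq, inv_pow]
  have hSCr2 : S * Cr ^ 2 = ∑ s ∈ univ.erase r, (lam s / (lam r - lam s) ^ 2) • P s := by
    rw [hS, hCr2, hP.sum_smul_mul_sum_smul, inter_univ]
    simp only [div_eq_mul_inv]
  have hCr2S : Cr ^ 2 * S = ∑ s ∈ univ.erase r, (lam s / (lam r - lam s) ^ 2) • P s := by
    rw [hS, hCr2, hP.sum_smul_mul_sum_smul, univ_inter]
    simp only [div_eq_mul_inv, mul_comm]
  have hPrS : P r * S = lam r • P r := by
    rw [hS, hP.mul_sum_smul, if_pos (mem_univ r)]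
  have hSPr : S * P r = lam r • P r := by
    rw [hS, hP.sum_smul_mul, if_pos (mem_univ r)]
  rw [hSCr2, hCr2S, hPrS, hSPr]
  simp only [transpose_smul, transpose_sum, sum_mul, mul_sum, smul_mul_assoc, mul_smul_comm,
    smul_smul, smul_add, smul_sum, ← sum_add_distrib]
  exact sum_congr rfl fun s _ => by module

/-- the inverse Fisher information identity
`2 ∑_{s ≠ r} (P_s ⊗ P_r + P_r ⊗ P_s) λ_r λ_s / (λ_r - λ_s)^2
  = 2 (Σ C_r² ⊗ P_r Σ + Σ P_r ⊗ C_r² Σ)`,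
where the Kronecker product acts on matrices by `(A ⊗ B) C = A C Bᵀ`. -/
theorem inverse_fisher_information_identity {p K : ℕ}
    (lam : Fin K → ℝ) (P : Fin K → Matrix (Fin p) (Fin p) ℝ)
    (S : Matrix (Fin p) (Fin p) ℝ)
    (hS : S = ∑ s, lam s • P s)
    (hSpd : S.PosDef)
    (hPsymm : ∀ s, (P s).IsSymm)
    (hPidem : ∀ s, P s * P s = P s)
    (hPorth : ∀ s t, s ≠ t → P s * P t = 0)
    (hPsum : ∑ s, P s = 1)
    (hlam : Function.Injective lam)
    (hlampos : ∀ s, 0 < lam s)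
    (r : Fin K)
    (Cr : Matrix (Fin p) (Fin p) ℝ)
    (hCr : Cr = ∑ s ∈ Finset.univ.erase r, (lam r - lam s)⁻¹ • P s) :
    ∀ C : Matrix (Fin p) (Fin p) ℝ,
      (2 : ℝ) • (∑ s ∈ Finset.univ.erase r,
          (lam r * lam s / (lam r - lam s) ^ 2) • (P s * C * (P r)ᵀ + P r * C * (P s)ᵀ))
        = (2 : ℝ) • ((S * Cr ^ 2) * C * (P r * S)ᵀ + (S * P r) * C * ((Cr ^ 2) * S)ᵀ) :=
  inverse_fisher_information_identity_general lam P S hS hPidem hPorth r Cr hCr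
end

section
/- Perturbation bound for spectral projectors: let Σ be symmetric with spectral decomposition Σ = Σ_s λ_s P_s, let E be symmetric, set Σ̃ = Σ + E, and let P̃_r be the spectral projector of Σ̃ onto the eigenvalues with indices in Δ_r = {j : μ_j(Σ) = λ_r} (eigenvalues in non-increasing order with multiplicity). If g̅_r = min(λ_{r−1} − λ_r, λ_r − λ_{r+1}) denotes the spectral gap, then ‖P̃_r − P_r‖ ≤ 4‖E‖/g̅_r, where ‖·‖ is the operator norm. -/
/-!
Write `P = P_Δ(Σ)` and `P̃ = P_Δ(Σ̃)`. Since both are self-adjoint,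
`P̃ - P = ((1 - P) P̃)ᵀ - (1 - P̃) P`, so it suffices to bound `‖(1 - P) P̃‖` and `‖(1 - P̃) P‖`.
Both are instances of one estimate: if `A`, `B` have orthonormal eigenbases, the eigenvalues of `A`
outside `Δ` are at distance `≥ a` from `λ`, and those of `B` inside `Δ` are within `δ` of `λ`, then
for `y = P_Δ(B) x` we get `a ‖(1 - P_Δ(A)) y‖ ≤ ‖(A - λ) y‖ ≤ ‖(B - λ) y‖ + ‖(A - B) y‖`, hence
`a ‖(1 - P_Δ(A)) P_Δ(B)‖ ≤ δ + ‖A - B‖`.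
Weyl's inequality `|μ̃_j - μ_j| ≤ ‖E‖` (from a dimension count and Rayleigh quotients) gives
`δ = ‖E‖, a = g` for `(A, B) = (Σ, Σ̃)` and `δ = 0, a = g - ‖E‖ ≥ g / 2` for `(A, B) = (Σ̃, Σ)`
as soon as `2 ‖E‖ < g`; otherwise `‖P̃ - P‖ ≤ 2 ≤ 4 ‖E‖ / g` trivially.
-/

open Matrix Finset
open scoped Matrix.Norms.L2Operator RealInnerProductSpace

lemma norm_sub_le_of_isSelfAdjoint {R : Type*} [NormedRing R] [StarRing R] [NormedStarGroup R]
    {p q : R} (hp : IsSelfAdjoint p) (hq : IsSelfAdjoint q) :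
    ‖q - p‖ ≤ ‖(1 - p) * q‖ + ‖(1 - q) * p‖ := by
  have hstar : star ((1 - p) * q) = q * (1 - p) := by
    rw [star_mul, star_sub, star_one, hp.star_eq, hq.star_eq]
  calc ‖q - p‖ = ‖star ((1 - p) * q) - (1 - q) * p‖ := by rw [hstar]; noncomm_ring
    _ ≤ ‖star ((1 - p) * q)‖ + ‖(1 - q) * p‖ := norm_sub_le _ _
    _ = ‖(1 - p) * q‖ + ‖(1 - q) * p‖ := by rw [norm_star]

namespace OrthonormalBasis

variable {ι F : Type*} [Fintype ι] [NormedAddCommGroup F] [InnerProductSpace ℝ F]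

noncomputable def proj (b : OrthonormalBasis ι ℝ F) (s : Finset ι) : F →L[ℝ] F :=
  ∑ i ∈ s, InnerProductSpace.rankOne ℝ (b i) (b i)

variable (b : OrthonormalBasis ι ℝ F) (s : Finset ι)

lemma proj_apply (x : F) : b.proj s x = ∑ i ∈ s, ⟪b i, x⟫ • b i := by
  simp [proj]

lemma inner_proj_apply [DecidableEq ι] (x : F) (i : ι) :
    ⟪b i, b.proj s x⟫ = if i ∈ s then ⟪b i, x⟫ else 0 := by
  simp [proj_apply, inner_sum, inner_smul_right, b.inner_eq_ite]

lemma norm_proj_apply_sq (x : F) : ‖b.proj s x‖ ^ 2 = ∑ i ∈ s, ⟪b i, x⟫ ^ 2 := by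
  classical
  simp [← b.sum_sq_inner_right (b.proj s x), inner_proj_apply, ite_pow, Finset.sum_ite_mem]

lemma norm_proj_apply_le (x : F) : ‖b.proj s x‖ ≤ ‖x‖ := by
  refine (sq_le_sq₀ (norm_nonneg _) (norm_nonneg _)).mp ?_
  rw [norm_proj_apply_sq, ← b.sum_sq_inner_right]
  exact Finset.sum_le_sum_of_subset_of_nonneg (Finset.subset_univ s) fun _ _ _ ↦ sq_nonneg _

lemma norm_proj_le : ‖b.proj s‖ ≤ 1 :=
  ContinuousLinearMap.opNorm_le_bound _ zero_le_one fun x ↦ by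
    simpa using b.norm_proj_apply_le s x

lemma one_sub_proj [DecidableEq ι] : 1 - b.proj s = b.proj sᶜ := by
  ext x
  simp only [_root_.sub_apply, one_apply_eq_self, proj_apply]
  rw [sub_eq_iff_eq_add', Finset.sum_add_sum_compl, b.sum_repr']

lemma isSelfAdjoint_proj [CompleteSpace F] : IsSelfAdjoint (b.proj s) := by
  simp [proj, IsSelfAdjoint, star_sum, ContinuousLinearMap.star_eq_adjoint]

section Eigenbasis

variable {b} {T : F →L[ℝ] F} {ν : ι → ℝ} (hT : ∀ i, T (b i) = ν i • b i)
include hT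

lemma inner_apply_of_eigen (x : F) (i : ι) : ⟪b i, T x⟫ = ν i * ⟪b i, x⟫ := by
  conv_lhs => rw [← b.sum_repr' x]
  simp only [map_sum, map_smul, hT, smul_smul]
  exact b.orthonormal.inner_right_fintype (fun j ↦ ⟪b j, x⟫ * ν j) i |>.trans (mul_comm _ _)

lemma inner_self_apply_of_eigen (x : F) : ⟪x, T x⟫ = ∑ i, ν i * ⟪b i, x⟫ ^ 2 := by
  rw [← b.sum_inner_mul_inner]
  refine Finset.sum_congr rfl fun i _ ↦ ?_
  rw [inner_apply_of_eigen hT, real_inner_comm x]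
  ring

lemma mul_norm_sq_le_inner_self_apply {m : ℝ} {x : F} (hm : ∀ i, ⟪b i, x⟫ ≠ 0 → m ≤ ν i) :
    m * ‖x‖ ^ 2 ≤ ⟪x, T x⟫ := by
  rw [inner_self_apply_of_eigen hT, ← b.sum_sq_inner_right, Finset.mul_sum]
  refine Finset.sum_le_sum fun i _ ↦ ?_
  by_cases hi : ⟪b i, x⟫ = 0
  · simp [hi]
  · exact mul_le_mul_of_nonneg_right (hm i hi) (sq_nonneg _)

lemma inner_self_apply_le_mul_norm_sq {M : ℝ} {x : F} (hM : ∀ i, ⟪b i, x⟫ ≠ 0 → ν i ≤ M) :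
    ⟪x, T x⟫ ≤ M * ‖x‖ ^ 2 := by
  rw [inner_self_apply_of_eigen hT, ← b.sum_sq_inner_right, Finset.mul_sum]
  refine Finset.sum_le_sum fun i _ ↦ ?_
  by_cases hi : ⟪b i, x⟫ = 0
  · simp [hi]
  · exact mul_le_mul_of_nonneg_right (hM i hi) (sq_nonneg _)

lemma norm_apply_sub_smul_sq (c : ℝ) (x : F) :
    ‖T x - c • x‖ ^ 2 = ∑ i, ((ν i - c) * ⟪b i, x⟫) ^ 2 := by
  simp only [← b.sum_sq_inner_right, inner_sub_right, inner_smul_right, inner_apply_of_eigen hT,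
    sub_mul]

lemma mul_norm_proj_compl_le [DecidableEq ι] {c a : ℝ} (ha : 0 ≤ a)
    (hgap : ∀ i ∉ s, a ≤ |ν i - c|) (x : F) :
    a * ‖b.proj sᶜ x‖ ≤ ‖T x - c • x‖ := by
  refine (sq_le_sq₀ (by positivity) (norm_nonneg _)).mp ?_
  rw [mul_pow, norm_proj_apply_sq, norm_apply_sub_smul_sq hT, Finset.mul_sum]
  calc ∑ i ∈ sᶜ, a ^ 2 * ⟪b i, x⟫ ^ 2 ≤ ∑ i ∈ sᶜ, ((ν i - c) * ⟪b i, x⟫) ^ 2 := by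
        refine Finset.sum_le_sum fun i hi ↦ ?_
        rw [mul_pow, ← sq_abs (ν i - c)]
        gcongr
        exact hgap i (Finset.mem_compl.mp hi)
    _ ≤ ∑ i, ((ν i - c) * ⟪b i, x⟫) ^ 2 :=
        Finset.sum_le_sum_of_subset_of_nonneg (Finset.subset_univ _) fun _ _ _ ↦ sq_nonneg _

lemma norm_apply_proj_sub_smul_le {c δ : ℝ} (hδ : 0 ≤ δ) (hnear : ∀ i ∈ s, |ν i - c| ≤ δ)
    (x : F) : ‖T (b.proj s x) - c • b.proj s x‖ ≤ δ * ‖b.proj s x‖ := by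
  classical
  refine (sq_le_sq₀ (norm_nonneg _) (by positivity)).mp ?_
  rw [mul_pow, norm_proj_apply_sq, norm_apply_sub_smul_sq hT, Finset.mul_sum]
  simp only [inner_proj_apply, mul_ite, mul_zero, ite_pow, zero_pow two_ne_zero,
    Finset.sum_ite_mem, Finset.univ_inter]
  refine Finset.sum_le_sum fun i hi ↦ ?_
  rw [mul_pow, ← sq_abs (ν i - c)]
  gcongr
  exact hnear i hi

end Eigenbasis

lemma mul_norm_proj_compl_mul_proj_le [DecidableEq ι] {b' : OrthonormalBasis ι ℝ F}
    {T T' : F →L[ℝ] F} {ν ν' : ι → ℝ} (hT : ∀ i, T (b i) = ν i • b i)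
    (hT' : ∀ i, T' (b' i) = ν' i • b' i) {c a δ : ℝ} (ha : 0 ≤ a) (hδ : 0 ≤ δ)
    (hgap : ∀ i ∉ s, a ≤ |ν i - c|) (hnear : ∀ i ∈ s, |ν' i - c| ≤ δ) :
    a * ‖b.proj sᶜ * b'.proj s‖ ≤ δ + ‖T - T'‖ := by
  rcases ha.eq_or_lt with rfl | ha
  · rw [zero_mul]; positivity
  rw [mul_comm, ← le_div_iff₀ ha]
  refine ContinuousLinearMap.opNorm_le_bound _ (by positivity) fun x ↦ ?_
  set y := b'.proj s x
  rw [div_mul_eq_mul_div, le_div_iff₀' ha, mul_apply_eq_comp]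
  calc a * ‖b.proj sᶜ y‖ ≤ ‖T y - c • y‖ := mul_norm_proj_compl_le s hT ha.le hgap y
    _ = ‖(T' y - c • y) + (T - T') y‖ := by rw [_root_.sub_apply]; abel_nf
    _ ≤ δ * ‖y‖ + ‖T - T'‖ * ‖y‖ :=
        norm_add_le_of_le (norm_apply_proj_sub_smul_le s hT' hδ hnear x) ((T - T').le_opNorm y)
    _ ≤ (δ + ‖T - T'‖) * ‖x‖ := by
        rw [← add_mul]; gcongr; exact b'.norm_proj_apply_le s x

lemma exists_ne_zero_inner_eq_zero (b' : OrthonormalBasis ι ℝ F) {t t' : Finset ι}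
    (hcard : Fintype.card ι < t.card + t'.card) :
    ∃ x ≠ 0, (∀ i ∉ t, ⟪b i, x⟫ = 0) ∧ ∀ i ∉ t', ⟪b' i, x⟫ = 0 := by
  have : FiniteDimensional ℝ F := .of_basis b.toBasis
  let W (e : OrthonormalBasis ι ℝ F) (u : Finset ι) :=
    Submodule.span ℝ (Set.range (e ∘ ((↑) : u → ι)))
  have finrank_W (e : OrthonormalBasis ι ℝ F) (u : Finset ι) :
      Module.finrank ℝ (W e u) = u.card := by
    rw [finrank_span_eq_card (e.orthonormal.linearIndependent.comp _ Subtype.val_injective),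
      Fintype.card_coe]
  have inner_eq_zero_of_mem (e : OrthonormalBasis ι ℝ F) (u : Finset ι) (x : F)
      (hx : x ∈ W e u) (i : ι) (hi : i ∉ u) : ⟪e i, x⟫ = 0 := by
    refine Submodule.mem_orthogonal_singleton_iff_inner_right.mp ?_
    refine Submodule.span_le.mpr ?_ hx
    rintro _ ⟨j, rfl⟩
    exact Submodule.mem_orthogonal_singleton_iff_inner_right.mpr
      (e.inner_eq_zero fun h ↦ hi (h ▸ j.2))
  have hW : ¬Disjoint (W b t) (W b' t') := fun h ↦ by
    have := Submodule.finrank_add_finrank_le_of_disjoint h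
    rw [finrank_W, finrank_W, Module.finrank_eq_card_basis b.toBasis] at this
    omega
  obtain ⟨x, hxt, hxt', hx⟩ : ∃ x ∈ W b t, x ∈ W b' t' ∧ x ≠ 0 := by
    simpa [Submodule.disjoint_def] using hW
  exact ⟨x, hx, inner_eq_zero_of_mem b t x hxt, inner_eq_zero_of_mem b' t' x hxt'⟩

section Weyl

variable {n : ℕ} {b b' : OrthonormalBasis (Fin n) ℝ F} {T T' : F →L[ℝ] F} {ν ν' : Fin n → ℝ}

/-- Weyl's inequality. The test vector lies in the span of the top `j + 1` eigenvectors of `T`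
and of the bottom `n - j` eigenvectors of `T'`, which must meet. -/
theorem eigenvalue_le_add_norm_sub (hT : ∀ i, T (b i) = ν i • b i)
    (hT' : ∀ i, T' (b' i) = ν' i • b' i) (hν : Antitone ν) (hν' : Antitone ν') (j : Fin n) :
    ν j ≤ ν' j + ‖T - T'‖ := by
  obtain ⟨x, hx, hxb, hxb'⟩ := b.exists_ne_zero_inner_eq_zero b' (t := Finset.Iic j)
    (t' := Finset.Ici j) (by simp only [Fin.card_Iic, Fin.card_Ici, Fintype.card_fin]; omega)
  have hlow : ν j * ‖x‖ ^ 2 ≤ ⟪x, T x⟫ := mul_norm_sq_le_inner_self_apply hT fun i hi ↦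
    hν (Finset.mem_Iic.mp (not_imp_comm.mp (hxb i) hi))
  have hup : ⟪x, T' x⟫ ≤ ν' j * ‖x‖ ^ 2 := inner_self_apply_le_mul_norm_sq hT' fun i hi ↦
    hν' (Finset.mem_Ici.mp (not_imp_comm.mp (hxb' i) hi))
  have hdiff : ⟪x, (T - T') x⟫ ≤ ‖T - T'‖ * ‖x‖ ^ 2 :=
    calc ⟪x, (T - T') x⟫ ≤ ‖x‖ * ‖(T - T') x‖ := real_inner_le_norm _ _
      _ ≤ ‖x‖ * (‖T - T'‖ * ‖x‖) := by gcongr; exact (T - T').le_opNorm x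
      _ = ‖T - T'‖ * ‖x‖ ^ 2 := by ring
  have hsplit : ⟪x, T x⟫ = ⟪x, T' x⟫ + ⟪x, (T - T') x⟫ := by
    rw [_root_.sub_apply, inner_sub_right]; ring
  refine le_of_mul_le_mul_right ?_ (pow_pos (norm_pos_iff.mpr hx) 2)
  linarith

theorem abs_eigenvalue_sub_le_norm_sub (hT : ∀ i, T (b i) = ν i • b i)
    (hT' : ∀ i, T' (b' i) = ν' i • b' i) (hν : Antitone ν) (hν' : Antitone ν') (j : Fin n) :
    |ν' j - ν j| ≤ ‖T' - T‖ := by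
  have h₁ := eigenvalue_le_add_norm_sub hT hT' hν hν' j
  have h₂ := eigenvalue_le_add_norm_sub hT' hT hν' hν j
  rw [norm_sub_rev] at h₁
  exact abs_sub_le_iff.mpr ⟨by linarith, by linarith⟩

theorem norm_proj_sub_proj_le {E : F →L[ℝ] F} (hT : ∀ i, T (b i) = ν i • b i)
    (hT' : ∀ i, (T + E) (b' i) = ν' i • b' i) (hν : Antitone ν) (hν' : Antitone ν')
    {s : Finset (Fin n)} {c g : ℝ} (hg : 0 < g) (hs : ∀ i ∈ s, ν i = c)
    (hgap : ∀ i ∉ s, g ≤ |ν i - c|) :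
    ‖b'.proj s - b.proj s‖ ≤ 4 * ‖E‖ / g := by
  have : FiniteDimensional ℝ F := .of_basis b.toBasis
  have hweyl (i : Fin n) : |ν' i - ν i| ≤ ‖E‖ := by
    simpa using abs_eigenvalue_sub_le_norm_sub hT hT' hν hν' i
  refine (norm_sub_le_of_isSelfAdjoint (b.isSelfAdjoint_proj s)
    (b'.isSelfAdjoint_proj s)).trans ?_
  rw [one_sub_proj, one_sub_proj, le_div_iff₀ hg]
  rcases le_or_gt g (2 * ‖E‖) with hsmall | hlarge
  · have hle_one (e e' : OrthonormalBasis (Fin n) ℝ F) : ‖e.proj sᶜ * e'.proj s‖ ≤ 1 :=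
      (norm_mul_le _ _).trans (mul_le_one₀ (e.norm_proj_le _) (norm_nonneg _) (e'.norm_proj_le _))
    nlinarith [hle_one b b', hle_one b' b, norm_nonneg (b.proj sᶜ * b'.proj s),
      norm_nonneg (b'.proj sᶜ * b.proj s)]
  · have h₁ : g * ‖b.proj sᶜ * b'.proj s‖ ≤ ‖E‖ + ‖E‖ := by
      simpa using b.mul_norm_proj_compl_mul_proj_le s hT hT' hg.le (norm_nonneg E) hgap
        fun i hi ↦ hs i hi ▸ hweyl i
    have hgap' : ∀ i ∉ s, g - ‖E‖ ≤ |ν' i - c| := fun i hi ↦ by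
      have := abs_sub_abs_le_abs_sub (ν i - c) (ν i - ν' i)
      rw [abs_sub_comm (ν i) (ν' i), sub_sub_sub_cancel_left] at this
      linarith [hgap i hi, hweyl i]
    have h₂ : (g - ‖E‖) * ‖b'.proj sᶜ * b.proj s‖ ≤ ‖E‖ := by
      simpa using b'.mul_norm_proj_compl_mul_proj_le s hT' hT (by linarith) le_rfl hgap'
        fun i hi ↦ by simp [hs i hi]
    nlinarith [norm_nonneg (b'.proj sᶜ * b.proj s)]

end Weyl

section Matrix

variable {m : Type*} [Fintype m] [DecidableEq m] {v : m → m → ℝ}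
  (hv : ∀ i j, v i ⬝ᵥ v j = if i = j then (1 : ℝ) else 0)

noncomputable def ofDotProduct : OrthonormalBasis m ℝ (EuclideanSpace ℝ m) :=
  have hon : Orthonormal ℝ fun i ↦ WithLp.toLp 2 (v i) := orthonormal_iff_ite.mpr fun i j ↦ by
    simpa [EuclideanSpace.inner_toLp_toLp, dotProduct_comm] using hv i j
  .mk hon (hon.linearIndependent.span_eq_top_of_card_eq_finrank' (by simp)).ge

lemma ofDotProduct_apply (i : m) : ofDotProduct hv i = WithLp.toLp 2 (v i) := by
  simp [ofDotProduct]

lemma toEuclideanCLM_ofDotProduct {A : Matrix m m ℝ} {μ : m → ℝ} (hA : ∀ i, A *ᵥ v i = μ i • v i)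
    (i : m) : toEuclideanCLM (𝕜 := ℝ) A (ofDotProduct hv i) = μ i • ofDotProduct hv i := by
  simp [ofDotProduct_apply, hA]

lemma toEuclideanCLM_sum_vecMulVec (s : Finset m) :
    toEuclideanCLM (𝕜 := ℝ) (∑ j ∈ s, vecMulVec (v j) (v j)) =
      (ofDotProduct hv).proj s := by
  ext1 ⟨x⟩
  simp [proj_apply, ofDotProduct_apply, vecMulVec_mulVec, EuclideanSpace.inner_toLp_toLp,
    dotProduct_comm]

end Matrix

end OrthonormalBasis

theorem projector_perturbation_bound_general {p : ℕ}
    (S E : Matrix (Fin p) (Fin p) ℝ)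
    (μ μ' : Fin p → ℝ) (v v' : Fin p → Fin p → ℝ)
    -- orthonormal eigenbases of Σ and Σ̃ = Σ + E, eigenvalues in non-increasing order
    (hv : ∀ i j, v i ⬝ᵥ v j = if i = j then (1 : ℝ) else 0)
    (hv' : ∀ i j, v' i ⬝ᵥ v' j = if i = j then (1 : ℝ) else 0)
    (heig : ∀ j, S.mulVec (v j) = μ j • v j)
    (heig' : ∀ j, (S + E).mulVec (v' j) = μ' j • v' j)
    (hmono : Antitone μ) (hmono' : Antitone μ')
    (lamr : ℝ)
    (Δr : Finset (Fin p)) (hΔ : ∀ j, j ∈ Δr ↔ μ j = lamr)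
    (g : ℝ) (hg : 0 < g) (hgap : ∀ j, μ j ≠ lamr → g ≤ |μ j - lamr|)
    (Pr P'r : Matrix (Fin p) (Fin p) ℝ)
    (hPr : Pr = ∑ j ∈ Δr, Matrix.vecMulVec (v j) (v j))
    (hP'r : P'r = ∑ j ∈ Δr, Matrix.vecMulVec (v' j) (v' j)) :
    ‖P'r - Pr‖ ≤ 4 * ‖E‖ / g := by
  have hT := OrthonormalBasis.toEuclideanCLM_ofDotProduct hv heig
  have hT' := OrthonormalBasis.toEuclideanCLM_ofDotProduct hv' heig'
  rw [map_add] at hT'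
  rw [← l2_opNorm_toEuclideanCLM, map_sub, hPr, hP'r,
    OrthonormalBasis.toEuclideanCLM_sum_vecMulVec, OrthonormalBasis.toEuclideanCLM_sum_vecMulVec]
  exact OrthonormalBasis.norm_proj_sub_proj_le hT hT' hmono hmono' hg (fun j ↦ (hΔ j).mp)
    fun j hj ↦ hgap j (mt (hΔ j).mpr hj)

/-- perturbation bound for spectral projectors, `‖P̃_r - P_r‖ ≤ 4 ‖E‖ / ḡ_r`,
where `P_r`, `P̃_r` are the spectral projectors of `Σ` and `Σ̃ = Σ + E` built from the
eigenvalue group `Δ_r = {j : μ_j = λ_r}` and `ḡ_r` is the spectral gap of `λ_r`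
(so that every other eigenvalue of `Σ` is at distance at least `ḡ_r` from `λ_r`). -/
theorem projector_perturbation_bound {p : ℕ}
    (S E : Matrix (Fin p) (Fin p) ℝ) (hS : S.IsSymm) (hSpsd : S.PosSemidef) (hE : E.IsSymm)
    (μ μ' : Fin p → ℝ) (v v' : Fin p → Fin p → ℝ)
    -- orthonormal eigenbases of Σ and Σ̃ = Σ + E, eigenvalues in non-increasing order
    (hv : ∀ i j, v i ⬝ᵥ v j = if i = j then (1 : ℝ) else 0)
    (hv' : ∀ i j, v' i ⬝ᵥ v' j = if i = j then (1 : ℝ) else 0)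
    (heig : ∀ j, S.mulVec (v j) = μ j • v j)
    (heig' : ∀ j, (S + E).mulVec (v' j) = μ' j • v' j)
    (hmono : Antitone μ) (hmono' : Antitone μ')
    (lamr : ℝ) (hlamr : ∃ j, μ j = lamr)
    (Δr : Finset (Fin p)) (hΔ : ∀ j, j ∈ Δr ↔ μ j = lamr)
    (g : ℝ) (hg : 0 < g) (hgap : ∀ j, μ j ≠ lamr → g ≤ |μ j - lamr|)
    (Pr P'r : Matrix (Fin p) (Fin p) ℝ)
    (hPr : Pr = ∑ j ∈ Δr, Matrix.vecMulVec (v j) (v j))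
    (hP'r : P'r = ∑ j ∈ Δr, Matrix.vecMulVec (v' j) (v' j)) :
    ‖P'r - Pr‖ ≤ 4 * ‖E‖ / g :=
  projector_perturbation_bound_general S E μ μ' v v' hv hv' heig heig' hmono hmono' lamr Δr hΔ g hg
    hgap Pr P'r hPr hP'r
end

section
/- Decomposition of the projector perturbation: under the conditions of the projector perturbation bound, P̃_r − P_r = L_r(E) + S_r(E) where L_r(E) = C_r E P_r + P_r E C_r with C_r = Σ_{s≠r} P_s/(λ_r − λ_s), and the remainder satisfies ‖S_r(E)‖ ≤ 14 (‖E‖/g̅_r)^2. -/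
/-!
Let `R` be the reduced resolvent `C_r` of `λ_r - Σ` and `R'` the reduced resolvent of
`K = λ_r - (Σ + E)` with respect to `P̃_r`. By Weyl's inequality every eigenvalue moves by at most
`ε = ‖E‖`, so for `ε < ḡ_r` the gap survives and `‖R'‖ ≤ 1 / (ḡ_r - ε)`. The two off-diagonal
pieces `X = (1 - P_r) P̃_r` and `Y = (1 - P̃_r) P_r` satisfy `Y = -R' E P_r` and the fixed-point
equation `X = R X (K P̃_r) + R E P̃_r`, so both have norm at most `ε / (ḡ_r - ε)`. With respect to
`P_r` the remainder `T = P̃_r - P_r - L_r(E)` has the blocks `(1 - P_r) T (1 - P_r) = X X*`,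
`P_r T P_r = -Y* Y` and `(1 - P_r) T P_r = -R X E P_r + R E R' E P_r`, all of second order in
`ε / ḡ_r`. Where `ε / ḡ_r` is too large for this to give `14 (ε / ḡ_r)²`, the first-order bounds
`‖P̃_r - P_r‖ ≤ ‖X‖ + ‖Y‖` and `‖P̃_r - P_r‖ ≤ 2` take over.
-/

open Matrix Finset
open scoped Matrix.Norms.L2Operator

section Algebra

variable {A : Type*} [Ring A] [StarRing A]

/-- `R` is the reduced resolvent of `H` at `0` for the spectral projection `P`; the paper's `C_r`
is the one of `λ_r - Σ`. -/
structure IsReducedResolvent (H P R : A) : Prop where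
  isStarProjection : IsStarProjection P
  commute : Commute H P
  mul_left_eq : R * H = 1 - P
  mul_right_eq : H * R = 1 - P
  mul_proj : R * P = 0
  isSelfAdjoint : IsSelfAdjoint R

namespace IsReducedResolvent

variable {H P R : A}

lemma mul_one_sub (h : IsReducedResolvent H P R) : R * (1 - P) = R := by
  rw [mul_sub, mul_one, h.mul_proj, sub_zero]

lemma proj_mul (h : IsReducedResolvent H P R) : P * R = 0 := by
  simpa [h.isStarProjection.isSelfAdjoint.star_eq, h.isSelfAdjoint.star_eq] using
    congrArg star h.mul_proj

lemma one_sub_mul (h : IsReducedResolvent H P R) : (1 - P) * R = R := by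
  rw [sub_mul, one_mul, h.proj_mul, sub_zero]

end IsReducedResolvent

variable {H E P P' R R' : A}

lemma one_sub_proj'_mul_proj (hR' : IsReducedResolvent (H - E) P' R') (hHP : H * P = 0) :
    (1 - P') * P = -(R' * E * P) := by
  rw [← hR'.mul_left_eq, mul_sub, sub_mul, mul_assoc, hHP]
  simp

lemma one_sub_proj_mul_proj' (hR : IsReducedResolvent H P R)
    (hR' : IsReducedResolvent (H - E) P' R') :
    (1 - P) * P' = R * ((1 - P) * P') * ((H - E) * P') + R * E * P' := by
  have hKP : (H - E) * P' = P' * ((H - E) * P') := by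
    conv_lhs => rw [← hR'.isStarProjection.isIdempotentElem.eq, ← mul_assoc, hR'.commute.eq,
      mul_assoc]
  calc (1 - P) * P' = R * (H - E) * P' + R * E * P' := by rw [← hR.mul_left_eq]; noncomm_ring
    _ = R * (1 - P) * P' * ((H - E) * P') + R * E * P' := by
      rw [hR.mul_one_sub, mul_assoc R P', ← hKP, mul_assoc]
    _ = _ := by simp only [mul_assoc]

lemma one_sub_mul_remainder_mul_one_sub (hP : IsStarProjection P) (hP' : IsStarProjection P') :
    (1 - P) * (P' - P - (R * E * P + P * E * R)) * (1 - P) =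
      (1 - P) * P' * star ((1 - P) * P') := by
  have hstar : star ((1 - P) * P') = P' * (1 - P) := by
    simp [star_mul, hP.isSelfAdjoint.star_eq, hP'.isSelfAdjoint.star_eq]
  calc (1 - P) * (P' - P - (R * E * P + P * E * R)) * (1 - P)
        = (1 - P) * P' * (1 - P) - (1 - P) * P * (1 - P) - (1 - P) * R * E * (P * (1 - P))
          - (1 - P) * P * E * R * (1 - P) := by noncomm_ring
    _ = (1 - P) * (P' * P') * (1 - P) := by
      rw [hP.one_sub_mul_self, hP.mul_one_sub_self, hP'.isIdempotentElem.eq]; noncomm_ring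
    _ = _ := by rw [hstar]; noncomm_ring

lemma mul_remainder_mul (hR : IsReducedResolvent H P R) (hP' : IsStarProjection P') :
    P * (P' - P - (R * E * P + P * E * R)) * P = -(star ((1 - P') * P) * ((1 - P') * P)) := by
  have hP := hR.isStarProjection
  have hstar : star ((1 - P') * P) = P * (1 - P') := by
    simp [star_mul, hP.isSelfAdjoint.star_eq, hP'.isSelfAdjoint.star_eq]
  calc P * (P' - P - (R * E * P + P * E * R)) * P
        = P * P' * P - P * P * P - P * R * E * P * P - P * P * E * (R * P) := by noncomm_ring
    _ = -(P * ((1 - P') * (1 - P')) * P) := by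
      rw [hR.proj_mul, hR.mul_proj, hP'.one_sub.isIdempotentElem.eq, hP.isIdempotentElem.eq]
      noncomm_ring
    _ = _ := by rw [hstar]; noncomm_ring

lemma one_sub_mul_remainder_mul (hR : IsReducedResolvent H P R)
    (hR' : IsReducedResolvent (H - E) P' R') (hHP : H * P = 0) :
    (1 - P) * (P' - P - (R * E * P + P * E * R)) * P =
      -(R * ((1 - P) * P') * E * P) + R * E * R' * E * P := by
  have hP := hR.isStarProjection
  have hR'E : (1 - P) * R' = R * (1 - P') + R * E * R' := by
    rw [← hR'.mul_right_eq, ← hR.mul_left_eq]; noncomm_ring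
  calc (1 - P) * (P' - P - (R * E * P + P * E * R)) * P
        = -((1 - P) * ((1 - P') * P)) + (1 - P) * P - (1 - P) * P * P
          - (1 - P) * R * E * (P * P) - (1 - P) * P * E * (R * P) := by noncomm_ring
    _ = (1 - P) * R' * E * P - R * E * P := by
      rw [one_sub_proj'_mul_proj hR' hHP, hP.one_sub_mul_self, hR.one_sub_mul, hR.mul_proj,
        hP.isIdempotentElem.eq]
      noncomm_ring
    _ = -(R * P' * E * P) + R * E * R' * E * P := by rw [hR'E]; noncomm_ring
    _ = _ := by rw [← mul_assoc, hR.mul_one_sub]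

end Algebra

lemma norm_le_blocks {A : Type*} [NormedRing A] [StarRing A] [NormedStarGroup A] {P T : A}
    (hT : IsSelfAdjoint T) (hP : IsSelfAdjoint P) :
    ‖T‖ ≤ ‖P * T * P‖ + ‖(1 - P) * T * (1 - P)‖ + 2 * ‖(1 - P) * T * P‖ := by
  have hstar : P * T * (1 - P) = star ((1 - P) * T * P) := by
    simp [star_mul, hT.star_eq, hP.star_eq, mul_assoc]
  have hsplit : T = P * T * P + (1 - P) * T * (1 - P) + (1 - P) * T * P + P * T * (1 - P) := by
    noncomm_ring
  calc ‖T‖ ≤ ‖P * T * P‖ + ‖(1 - P) * T * (1 - P)‖ + ‖(1 - P) * T * P‖ + ‖P * T * (1 - P)‖ := by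
        conv_lhs => rw [hsplit]
        exact norm_add₄_le ..
    _ = _ := by rw [hstar, norm_star]; ring

section Estimates

variable {A : Type*} [NormedRing A] [StarRing A] [CStarRing A] {H E P P' R R' : A} {ε g : ℝ}

lemma norm_one_sub_proj_mul_proj'_le (hR : IsReducedResolvent H P R)
    (hR' : IsReducedResolvent (H - E) P' R') (hRn : ‖R‖ ≤ g⁻¹) (hEn : ‖E‖ ≤ ε)
    (hKP : ‖(H - E) * P'‖ ≤ ε) (hεg : ε < g) :
    ‖(1 - P) * P'‖ ≤ ε / (g - ε) := by
  set x := ‖(1 - P) * P'‖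
  have hε : 0 ≤ ε := (norm_nonneg E).trans hEn
  have hP' : ‖P'‖ ≤ 1 := IsStarProjection.norm_le _ hR'.isStarProjection
  have hg : 0 ≤ g⁻¹ := inv_nonneg.2 (by linarith)
  have key : x ≤ g⁻¹ * (x * ε + ε) := by
    calc x = ‖R * ((1 - P) * P') * ((H - E) * P') + R * E * P'‖ := by
          rw [← one_sub_proj_mul_proj' hR hR']
      _ ≤ ‖R‖ * x * ‖(H - E) * P'‖ + ‖R‖ * ‖E‖ * ‖P'‖ :=
          norm_add_le_of_le norm_mul₃_le norm_mul₃_le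
      _ ≤ g⁻¹ * x * ε + g⁻¹ * ε * 1 := by gcongr
      _ = g⁻¹ * (x * ε + ε) := by ring
  rw [le_inv_mul_iff₀ (by linarith)] at key
  rw [le_div_iff₀ (by linarith)]
  linarith

lemma norm_one_sub_proj'_mul_proj_le (hP : IsStarProjection P)
    (hR' : IsReducedResolvent (H - E) P' R') (hHP : H * P = 0) (hR'n : ‖R'‖ ≤ (g - ε)⁻¹)
    (hEn : ‖E‖ ≤ ε) : ‖(1 - P') * P‖ ≤ ε / (g - ε) := by
  have hε : 0 ≤ ε := (norm_nonneg E).trans hEn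
  have hgε : 0 ≤ (g - ε)⁻¹ := (norm_nonneg R').trans hR'n
  calc ‖(1 - P') * P‖ = ‖R' * E * P‖ := by rw [one_sub_proj'_mul_proj hR' hHP, norm_neg]
    _ ≤ (g - ε)⁻¹ * ε * 1 := by
      refine norm_mul₃_le.trans ?_
      gcongr
      exact IsStarProjection.norm_le _ hP
    _ = ε / (g - ε) := by ring

lemma norm_remainder_le (hP : IsStarProjection P) :
    ‖P' - P - (R * E * P + P * E * R)‖ ≤ ‖P' - P‖ + 2 * (‖R‖ * ‖E‖) := by
  have hPn : ‖P‖ ≤ 1 := IsStarProjection.norm_le _ hP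
  have h1 : ‖R * E * P‖ ≤ ‖R‖ * ‖E‖ := by
    calc ‖R * E * P‖ ≤ ‖R‖ * ‖E‖ * ‖P‖ := norm_mul₃_le
      _ ≤ ‖R‖ * ‖E‖ * 1 := by gcongr
      _ = _ := mul_one _
  have h2 : ‖P * E * R‖ ≤ ‖R‖ * ‖E‖ := by
    calc ‖P * E * R‖ ≤ ‖P‖ * ‖E‖ * ‖R‖ := norm_mul₃_le
      _ ≤ 1 * ‖E‖ * ‖R‖ := by gcongr
      _ = _ := by ring
  calc _ ≤ ‖P' - P‖ + ‖R * E * P + P * E * R‖ := norm_sub_le _ _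
    _ ≤ _ := by linarith [norm_add_le (R * E * P) (P * E * R)]

lemma norm_proj_sub_proj_le (hP : IsSelfAdjoint P) (hP' : IsSelfAdjoint P') :
    ‖P' - P‖ ≤ ‖(1 - P) * P'‖ + ‖(1 - P') * P‖ := by
  have h : P' - P = star ((1 - P) * P') - (1 - P') * P := by
    simp only [star_mul, star_sub, star_one, hP.star_eq, hP'.star_eq]; noncomm_ring
  rw [h, ← norm_star ((1 - P) * P')]
  exact norm_sub_le _ _

lemma norm_remainder_le_first_order (hR : IsReducedResolvent H P R)
    (hR' : IsReducedResolvent (H - E) P' R') (hHP : H * P = 0)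
    (hRn : ‖R‖ ≤ g⁻¹) (hR'n : ‖R'‖ ≤ (g - ε)⁻¹) (hEn : ‖E‖ ≤ ε)
    (hKP : ‖(H - E) * P'‖ ≤ ε) (hεg : ε < g) :
    ‖P' - P - (R * E * P + P * E * R)‖ ≤ 2 * (ε / (g - ε)) + 2 * (ε / g) := by
  have hP := hR.isStarProjection
  have hRE : ‖R‖ * ‖E‖ ≤ ε / g := by
    rw [div_eq_inv_mul]
    exact mul_le_mul hRn hEn (norm_nonneg _) ((norm_nonneg R).trans hRn)
  calc _ ≤ ‖P' - P‖ + 2 * (‖R‖ * ‖E‖) := norm_remainder_le hP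
    _ ≤ ‖(1 - P) * P'‖ + ‖(1 - P') * P‖ + 2 * (‖R‖ * ‖E‖) := by
      gcongr
      exact norm_proj_sub_proj_le hP.isSelfAdjoint hR'.isStarProjection.isSelfAdjoint
    _ ≤ ε / (g - ε) + ε / (g - ε) + 2 * (ε / g) := by
      gcongr
      · exact norm_one_sub_proj_mul_proj'_le hR hR' hRn hEn hKP hεg
      · exact norm_one_sub_proj'_mul_proj_le hP hR' hHP hR'n hEn
    _ = _ := by ring

lemma norm_remainder_le_second_order (hR : IsReducedResolvent H P R)
    (hR' : IsReducedResolvent (H - E) P' R') (hHP : H * P = 0) (hE : IsSelfAdjoint E)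
    (hRn : ‖R‖ ≤ g⁻¹) (hR'n : ‖R'‖ ≤ (g - ε)⁻¹) (hEn : ‖E‖ ≤ ε)
    (hKP : ‖(H - E) * P'‖ ≤ ε) (hεg : ε < g) :
    ‖P' - P - (R * E * P + P * E * R)‖ ≤
      2 * (ε / (g - ε)) ^ 2 + 4 * (ε / g) * (ε / (g - ε)) := by
  have hP := hR.isStarProjection
  have hε : 0 ≤ ε := (norm_nonneg E).trans hEn
  have hg : 0 < g := by linarith
  have hX := norm_one_sub_proj_mul_proj'_le hR hR' hRn hEn hKP hεg
  have hY := norm_one_sub_proj'_mul_proj_le hP hR' hHP hR'n hEn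
  have hT : IsSelfAdjoint (P' - P - (R * E * P + P * E * R)) := by
    simp only [IsSelfAdjoint, star_sub, star_add, star_mul, hP.isSelfAdjoint.star_eq,
      hR'.isStarProjection.isSelfAdjoint.star_eq, hR.isSelfAdjoint.star_eq, hE.star_eq]
    noncomm_ring
  have hPn : ‖P‖ ≤ 1 := IsStarProjection.norm_le _ hP
  have hoff : ‖(1 - P) * (P' - P - (R * E * P + P * E * R)) * P‖ ≤
      2 * (ε / g) * (ε / (g - ε)) := by
    have hgε : 0 ≤ (g - ε)⁻¹ := (norm_nonneg R').trans hR'n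
    have hginv : 0 ≤ g⁻¹ := inv_nonneg.2 hg.le
    rw [one_sub_mul_remainder_mul hR hR' hHP]
    calc _ ≤ ‖R * ((1 - P) * P') * E * P‖ + ‖R * E * R' * E * P‖ := by
          simpa only [norm_neg] using norm_add_le (-(R * ((1 - P) * P') * E * P)) _
      _ ≤ ‖R‖ * ‖(1 - P) * P'‖ * ‖E‖ * ‖P‖ + ‖R‖ * ‖E‖ * ‖R'‖ * ‖E‖ * ‖P‖ :=
          add_le_add (norm_mul_le_of_le norm_mul₃_le le_rfl)
            (norm_mul_le_of_le (norm_mul_le_of_le norm_mul₃_le le_rfl) le_rfl)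
      _ ≤ g⁻¹ * (ε / (g - ε)) * ε * 1 + g⁻¹ * ε * (g - ε)⁻¹ * ε * 1 := by gcongr
      _ = 2 * (ε / g) * (ε / (g - ε)) := by ring
  refine (norm_le_blocks hT hP.isSelfAdjoint).trans ?_
  rw [mul_remainder_mul hR hR'.isStarProjection, norm_neg, CStarRing.norm_star_mul_self,
    one_sub_mul_remainder_mul_one_sub hP hR'.isStarProjection, CStarRing.norm_self_mul_star]
  have hXY : ‖(1 - P') * P‖ * ‖(1 - P') * P‖ + ‖(1 - P) * P'‖ * ‖(1 - P) * P'‖ ≤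
      2 * (ε / (g - ε)) ^ 2 := by
    have hb : 0 ≤ ε / (g - ε) := (norm_nonneg _).trans hX
    nlinarith [mul_self_le_mul_self (norm_nonneg _) hX, mul_self_le_mul_self (norm_nonneg _) hY]
  linarith

end Estimates

lemma le_fourteen_mul_sq {a t : ℝ} (ha : 0 ≤ a) (h_large : t ≤ 2 + 2 * a)
    (h_small : a < 3 / 4 → t ≤ 2 * (a / (1 - a)) + 2 * a ∧
      t ≤ 2 * (a / (1 - a)) ^ 2 + 4 * a * (a / (1 - a))) :
    t ≤ 14 * a ^ 2 := by
  rcases le_or_gt (3 / 4) a with h34 | h34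
  · nlinarith
  obtain ⟨h_first, h_second⟩ := h_small h34
  rcases le_or_gt a (2 / 5) with h25 | h25
  · have hb' : a / (1 - a) ≤ 5 / 3 * a := by
      rw [div_le_iff₀ (by linarith)]; nlinarith
    have hb0 : 0 ≤ a / (1 - a) := div_nonneg ha (by linarith)
    nlinarith [mul_le_mul hb' hb' hb0 (by positivity)]
  · have : 2 * (a / (1 - a)) ≤ 14 * a ^ 2 - 2 * a := by
      rw [mul_div_assoc', div_le_iff₀ (by linarith)]
      nlinarith [mul_nonneg ha (mul_nonneg (sub_nonneg.2 h25.le) (sub_nonneg.2 h34.le))]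
    linarith

section SpectralProjection

variable {ι A : Type*}

lemma norm_indicator_le [Fintype ι] {s : Set ι} {f : ι → ℝ} {B : ℝ} (hB : 0 ≤ B)
    (h : ∀ j ∈ s, |f j| ≤ B) : ‖s.indicator f‖ ≤ B := by
  refine (pi_norm_le_iff_of_nonneg hB).2 fun j => ?_
  by_cases hj : j ∈ s <;> simp [hj, h j, hB]

lemma isReducedResolvent_map [Ring A] [StarRing A] [Algebra ℝ A] (φ : (ι → ℝ) →⋆ₐ[ℝ] A)
    (s : Set ι) (h : ι → ℝ) (hs : ∀ j ∉ s, h j ≠ 0) :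
    IsReducedResolvent (φ h) (φ (s.indicator 1)) (φ (sᶜ.indicator h⁻¹)) := by
  have pointwise {f₁ f₂ f : ι → ℝ} (hf : ∀ j, f₁ j * f₂ j = f j) : φ f₁ * φ f₂ = φ f := by
    rw [← map_mul]; exact congrArg φ (funext hf)
  refine ⟨⟨pointwise fun j => ?_, isSelfAdjoint_map φ _⟩, (Commute.all _ _).map φ, ?_, ?_, ?_,
    isSelfAdjoint_map φ _⟩
  · by_cases hj : j ∈ s <;> simp [hj]
  all_goals
    first | rw [← map_zero φ] | rw [← map_one φ, ← map_sub]
    exact pointwise fun j => by by_cases hj : j ∈ s <;> simp [hj, hs j]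

lemma norm_map_indicator_inv_le [Fintype ι] [NormedRing A] [StarRing A] [Algebra ℝ A]
    (φ : (ι → ℝ) →⋆ₐ[ℝ] A) (hφ : ∀ f, ‖φ f‖ ≤ ‖f‖) {s : Set ι} {ν : ι → ℝ} {lam δ : ℝ}
    (hδ : 0 < δ) (hgap : ∀ j ∉ s, δ ≤ |ν j - lam|) :
    ‖φ (sᶜ.indicator fun j => (lam - ν j)⁻¹)‖ ≤ δ⁻¹ := by
  refine (hφ _).trans (norm_indicator_le (inv_nonneg.2 hδ.le) fun j hj => ?_)
  rw [abs_inv, abs_sub_comm]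
  exact inv_anti₀ hδ (hgap j hj)

lemma sub_ne_zero_of_le_abs {x lam δ : ℝ} (hδ : 0 < δ) (h : δ ≤ |x - lam|) : lam - x ≠ 0 := by
  rw [abs_sub_comm] at h
  exact abs_pos.1 (hδ.trans_le h)

lemma sub_le_abs_sub_of_abs_sub_le {x y lam δ ε : ℝ} (h : δ ≤ |x - lam|) (hxy : |y - x| ≤ ε) :
    δ - ε ≤ |y - lam| := by
  have := abs_sub_le x y lam
  rw [abs_sub_comm x y] at this
  linarith

lemma map_const_sub [Ring A] [Star A] [Algebra ℝ A] (φ : (ι → ℝ) →⋆ₐ[ℝ] A) (lam : ℝ)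
    (ν : ι → ℝ) : φ (fun j => lam - ν j) = algebraMap ℝ A lam - φ ν := by
  rw [← AlgHomClass.commutes φ lam, ← map_sub]; rfl

lemma map_mul_indicator_eq_zero [Ring A] [Star A] [Algebra ℝ A] (φ : (ι → ℝ) →⋆ₐ[ℝ] A)
    {s : Set ι} {f : ι → ℝ} (hf : ∀ j ∈ s, f j = 0) : φ f * φ (s.indicator 1) = 0 := by
  rw [← map_mul, ← map_zero φ]
  exact congrArg φ (funext fun j => by by_cases hj : j ∈ s <;> simp [hj, hf j])

lemma norm_map_mul_indicator_le [Fintype ι] [NormedRing A] [Star A] [Algebra ℝ A]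
    (φ : (ι → ℝ) →⋆ₐ[ℝ] A) (hφ : ∀ f, ‖φ f‖ ≤ ‖f‖) {s : Set ι} {f : ι → ℝ} {B : ℝ}
    (hB : 0 ≤ B) (hf : ∀ j ∈ s, |f j| ≤ B) : ‖φ f * φ (s.indicator 1)‖ ≤ B := by
  have hmul : f * s.indicator 1 = s.indicator f := by
    funext j; by_cases hj : j ∈ s <;> simp [hj]
  rw [← map_mul, hmul]
  exact (hφ _).trans (norm_indicator_le hB hf)

theorem norm_remainder_le_of_spectral [Fintype ι] [NormedRing A] [StarRing A] [CStarRing A]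
    [Algebra ℝ A]
    (φ φ' : (ι → ℝ) →⋆ₐ[ℝ] A) (hφ : ∀ f, ‖φ f‖ ≤ ‖f‖) (hφ' : ∀ f, ‖φ' f‖ ≤ ‖f‖)
    {μ μ' : ι → ℝ} {E : A} (hE : φ' μ' = φ μ + E) (hμ : ∀ j, |μ' j - μ j| ≤ ‖E‖)
    {lam g : ℝ} {s : Set ι} (hs : ∀ j ∈ s, μ j = lam) (hg : 0 < g)
    (hgap : ∀ j ∉ s, g ≤ |μ j - lam|) {P P' R : A} (hP : P = φ (s.indicator 1))
    (hP' : P' = φ' (s.indicator 1)) (hR : R = φ (sᶜ.indicator fun j => (lam - μ j)⁻¹)) :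
    ‖P' - P - (R * E * P + P * E * R)‖ ≤ 14 * (‖E‖ / g) ^ 2 := by
  set ε := ‖E‖
  have hε : 0 ≤ ε := norm_nonneg E
  have hEsa : IsSelfAdjoint E := by
    rw [show E = φ' μ' - φ μ by rw [hE]; abel]
    exact (isSelfAdjoint_map φ' μ').sub (isSelfAdjoint_map φ μ)
  have hK : φ' (fun j => lam - μ' j) = φ (fun j => lam - μ j) - E := by
    rw [map_const_sub, map_const_sub, hE]; abel
  have hRes : IsReducedResolvent (φ fun j => lam - μ j) P R := by
    rw [hP, hR]
    exact isReducedResolvent_map φ s _ fun j hj => sub_ne_zero_of_le_abs hg (hgap j hj)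
  have hHP : φ (fun j => lam - μ j) * P = 0 :=
    hP ▸ map_mul_indicator_eq_zero φ fun j hj => by simp [hs j hj]
  have hRn : ‖R‖ ≤ g⁻¹ := hR ▸ norm_map_indicator_inv_le φ hφ hg hgap
  have hP'n : ‖P'‖ ≤ 1 := hP' ▸ (hφ' _).trans (norm_indicator_le zero_le_one (by simp))
  apply le_fourteen_mul_sq (div_nonneg hε hg.le)
  · calc _ ≤ ‖P' - P‖ + 2 * (‖R‖ * ε) := norm_remainder_le hRes.isStarProjection
      _ ≤ (1 + 1) + 2 * (g⁻¹ * ε) := by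
        gcongr
        · exact (norm_sub_le _ _).trans
            (add_le_add hP'n (IsStarProjection.norm_le _ hRes.isStarProjection))
      _ = 2 + 2 * (ε / g) := by ring
  intro hsmall
  have hεg : ε < g := by linarith [(div_lt_iff₀ hg).1 hsmall]
  have hgap' : ∀ j ∉ s, g - ε ≤ |μ' j - lam| := fun j hj =>
    sub_le_abs_sub_of_abs_sub_le (hgap j hj) (hμ j)
  have hRes' : IsReducedResolvent (φ (fun j => lam - μ j) - E) P'
      (φ' (sᶜ.indicator fun j => (lam - μ' j)⁻¹)) := by
    rw [hP', ← hK]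
    exact isReducedResolvent_map φ' s _ fun j hj =>
      sub_ne_zero_of_le_abs (sub_pos.2 hεg) (hgap' j hj)
  have hR'n := norm_map_indicator_inv_le φ' hφ' (sub_pos.2 hεg) hgap'
  have hKP : ‖(φ (fun j => lam - μ j) - E) * P'‖ ≤ ε := by
    rw [← hK, hP']
    exact norm_map_mul_indicator_le φ' hφ' hε fun j hj => by
      rw [abs_sub_comm, ← hs j hj]; exact hμ j
  have hb : ε / g / (1 - ε / g) = ε / (g - ε) := by field_simp
  rw [hb]
  exact ⟨norm_remainder_le_first_order hRes hRes' hHP hRn hR'n le_rfl hKP hεg,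
    norm_remainder_le_second_order hRes hRes' hHP hEsa hRn hR'n le_rfl hKP hεg⟩

end SpectralProjection

section SpectralCalculus

variable {n : Type*} [Fintype n]

lemma exists_ne_zero_mulVec_eq_zero [LinearOrder n] (V W : Matrix n n ℝ) (j : n) :
    ∃ x : n → ℝ, x ≠ 0 ∧ (∀ k, j < k → (V *ᵥ x) k = 0) ∧ (∀ k, k < j → (W *ᵥ x) k = 0) := by
  let L : (n → ℝ) →ₗ[ℝ] ({k // j < k} → ℝ) × ({k // k < j} → ℝ) :=
    ((LinearMap.funLeft ℝ ℝ Subtype.val).comp V.mulVecLin).prod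
      ((LinearMap.funLeft ℝ ℝ Subtype.val).comp W.mulVecLin)
  have hcard : Fintype.card {k // j < k} + Fintype.card {k // k < j} < Fintype.card n := by
    rw [← Fintype.card_subtype_or_disjoint _ _ (fun _ h1 h2 k hk => lt_asymm (h1 k hk) (h2 k hk))]
    exact Fintype.card_subtype_lt (x := j) (by simp)
  have hker : LinearMap.ker L ≠ ⊥ := LinearMap.ker_ne_bot_of_finrank_lt (by
    simpa [Module.finrank_prod, Module.finrank_fintype_fun_eq_card] using hcard)
  obtain ⟨x, hxL, hx0⟩ := Submodule.ne_bot_iff _ |>.1 hker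
  refine ⟨x, hx0, fun k hk => ?_, fun k hk => ?_⟩
  · exact congrFun (congrArg Prod.fst hxL) ⟨k, hk⟩
  · exact congrFun (congrArg Prod.snd hxL) ⟨k, hk⟩

variable [DecidableEq n]

lemma abs_dotProduct_mulVec_le (E : Matrix n n ℝ) (x : n → ℝ) :
    |x ⬝ᵥ (E *ᵥ x)| ≤ ‖E‖ * (x ⬝ᵥ x) := by
  set y : EuclideanSpace ℝ n := WithLp.toLp 2 x
  have hy : ‖y‖ ^ 2 = x ⬝ᵥ x := by
    rw [EuclideanSpace.real_norm_sq_eq]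
    simp [y, dotProduct, sq]
  calc |x ⬝ᵥ (E *ᵥ x)| = |inner ℝ y (toEuclideanCLM (𝕜 := ℝ) E y)| := by
        rw [inner_toEuclideanCLM]
    _ ≤ ‖y‖ * ‖toEuclideanCLM (𝕜 := ℝ) E y‖ := abs_real_inner_le_norm _ _
    _ ≤ ‖y‖ * (‖E‖ * ‖y‖) := by gcongr; exact (toEuclideanCLM (𝕜 := ℝ) E).le_opNorm y
    _ = ‖E‖ * (x ⬝ᵥ x) := by rw [← hy]; ring

lemma Matrix.of_mem_orthogonalGroup {v : n → n → ℝ}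
    (hv : ∀ i j, v i ⬝ᵥ v j = if i = j then (1 : ℝ) else 0) :
    Matrix.of v ∈ orthogonalGroup n ℝ := by
  rw [mem_orthogonalGroup_iff]
  ext i j
  simpa [mul_apply, one_apply, dotProduct] using hv i j

noncomputable def Matrix.diagonalStarAlgHom : (n → ℝ) →⋆ₐ[ℝ] Matrix n n ℝ :=
  { diagonalAlgHom ℝ with map_star' := fun f => (diagonal_conjTranspose f).symm }

noncomputable def spectralCalculus (U : orthogonalGroup n ℝ) : (n → ℝ) →⋆ₐ[ℝ] Matrix n n ℝ :=
  (Unitary.conjStarAlgAut ℝ (Matrix n n ℝ) (star U)).toStarAlgHom.comp diagonalStarAlgHom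

variable (U : orthogonalGroup n ℝ)

lemma spectralCalculus_apply (f : n → ℝ) :
    spectralCalculus U f = (U : Matrix n n ℝ)ᵀ * diagonal f * U := rfl

lemma norm_spectralCalculus (f : n → ℝ) : ‖spectralCalculus U f‖ = ‖f‖ := by
  rw [spectralCalculus_apply, CStarRing.norm_mul_coe_unitary,
    ← conjTranspose_eq_transpose_of_trivial, ← star_eq_conjTranspose, ← Unitary.coe_star,
    CStarRing.norm_coe_unitary_mul, l2_opNorm_diagonal]

lemma spectralCalculus_indicator (s : Finset n) (c : n → ℝ) :
    spectralCalculus U ((s : Set n).indicator c) =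
      ∑ j ∈ s, c j • vecMulVec ((U : Matrix n n ℝ) j) ((U : Matrix n n ℝ) j) := by
  ext a b
  simp [spectralCalculus_apply, mul_apply, diagonal, vecMulVec_apply, Matrix.sum_apply,
    Set.indicator_apply]
  exact Finset.sum_congr rfl fun j _ => by ring

lemma eq_spectralCalculus_of_mulVec {S : Matrix n n ℝ} {μ : n → ℝ}
    (h : ∀ j, S *ᵥ (U : Matrix n n ℝ) j = μ j • (U : Matrix n n ℝ) j) :
    S = spectralCalculus U μ := by
  have hcol : S * (U : Matrix n n ℝ)ᵀ = (U : Matrix n n ℝ)ᵀ * diagonal μ := by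
    ext a j
    rw [mul_diagonal]
    simpa [mul_apply, mulVec, dotProduct, mul_comm] using congrFun (h j) a
  rw [spectralCalculus_apply, ← hcol, Matrix.mul_assoc, (mem_orthogonalGroup_iff' ..).1 U.2,
    Matrix.mul_one]

lemma dotProduct_spectralCalculus_mulVec (f x : n → ℝ) :
    x ⬝ᵥ (spectralCalculus U f *ᵥ x) = ∑ j, f j * ((U : Matrix n n ℝ) *ᵥ x) j ^ 2 := by
  rw [spectralCalculus_apply, ← mulVec_mulVec, ← mulVec_mulVec, dotProduct_mulVec,
    vecMul_transpose]
  simp only [dotProduct, mulVec_diagonal]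
  exact Finset.sum_congr rfl fun j _ => by ring

/-- Weyl's inequality, tested on a vector of `span {U k | k ≤ j} ∩ span {U' k | j ≤ k}`. -/
lemma sub_norm_le_of_antitone [LinearOrder n] (U U' : orthogonalGroup n ℝ) {μ μ' : n → ℝ}
    (hμ : Antitone μ) (hμ' : Antitone μ') {E : Matrix n n ℝ}
    (hE : spectralCalculus U' μ' = spectralCalculus U μ + E) (j : n) : μ j - ‖E‖ ≤ μ' j := by
  obtain ⟨x, hx0, hxU, hxU'⟩ := exists_ne_zero_mulVec_eq_zero (U : Matrix n n ℝ) U' j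
  have hnorm (V : orthogonalGroup n ℝ) : ∑ k, ((V : Matrix n n ℝ) *ᵥ x) k ^ 2 = x ⬝ᵥ x := by
    simpa using (dotProduct_spectralCalculus_mulVec V 1 x).symm
  have hlow : μ j * (x ⬝ᵥ x) ≤ x ⬝ᵥ (spectralCalculus U μ *ᵥ x) := by
    rw [dotProduct_spectralCalculus_mulVec, ← hnorm U, Finset.mul_sum]
    refine Finset.sum_le_sum fun k _ => ?_
    rcases le_or_gt k j with hkj | hjk
    · exact mul_le_mul_of_nonneg_right (hμ hkj) (sq_nonneg _)
    · simp [hxU k hjk]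
  have hhigh : x ⬝ᵥ (spectralCalculus U' μ' *ᵥ x) ≤ μ' j * (x ⬝ᵥ x) := by
    rw [dotProduct_spectralCalculus_mulVec, ← hnorm U', Finset.mul_sum]
    refine Finset.sum_le_sum fun k _ => ?_
    rcases le_or_gt j k with hjk | hkj
    · exact mul_le_mul_of_nonneg_right (hμ' hjk) (sq_nonneg _)
    · simp [hxU' k hkj]
  have hpos : 0 < x ⬝ᵥ x := lt_of_le_of_ne (hnorm U ▸ Finset.sum_nonneg fun k _ => sq_nonneg _)
    (Ne.symm (mt dotProduct_self_eq_zero.1 hx0))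
  rw [hE, add_mulVec, dotProduct_add] at hhigh
  have hEx := (abs_le.1 (abs_dotProduct_mulVec_le E x)).1
  nlinarith

lemma abs_sub_le_norm_of_antitone [LinearOrder n] (U U' : orthogonalGroup n ℝ) {μ μ' : n → ℝ}
    (hμ : Antitone μ) (hμ' : Antitone μ') {E : Matrix n n ℝ}
    (hE : spectralCalculus U' μ' = spectralCalculus U μ + E) (j : n) : |μ' j - μ j| ≤ ‖E‖ := by
  have hE' : spectralCalculus U μ = spectralCalculus U' μ' + -E := by rw [hE]; abel
  have h1 := sub_norm_le_of_antitone U U' hμ hμ' hE j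
  have h2 := sub_norm_le_of_antitone U' U hμ' hμ hE' j
  rw [norm_neg] at h2
  exact abs_le.2 ⟨by linarith, by linarith⟩

end SpectralCalculus

theorem projector_perturbation_decomposition_general {p : ℕ}
    (S E : Matrix (Fin p) (Fin p) ℝ)
    (μ μ' : Fin p → ℝ) (v v' : Fin p → Fin p → ℝ)
    (hv : ∀ i j, v i ⬝ᵥ v j = if i = j then (1 : ℝ) else 0)
    (hv' : ∀ i j, v' i ⬝ᵥ v' j = if i = j then (1 : ℝ) else 0)
    (heig : ∀ j, S.mulVec (v j) = μ j • v j)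
    (heig' : ∀ j, (S + E).mulVec (v' j) = μ' j • v' j)
    (hmono : Antitone μ) (hmono' : Antitone μ')
    (lamr : ℝ)
    (Δr : Finset (Fin p)) (hΔ : ∀ j, j ∈ Δr ↔ μ j = lamr)
    (g : ℝ) (hg : 0 < g) (hgap : ∀ j, μ j ≠ lamr → g ≤ |μ j - lamr|)
    (Pr P'r Cr : Matrix (Fin p) (Fin p) ℝ)
    (hPr : Pr = ∑ j ∈ Δr, Matrix.vecMulVec (v j) (v j))
    (hP'r : P'r = ∑ j ∈ Δr, Matrix.vecMulVec (v' j) (v' j))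
    (hCr : Cr = ∑ j ∈ Δrᶜ, (lamr - μ j)⁻¹ • Matrix.vecMulVec (v j) (v j)) :
    ‖P'r - Pr - (Cr * E * Pr + Pr * E * Cr)‖ ≤ 14 * (‖E‖ / g) ^ 2 := by
  let U : orthogonalGroup (Fin p) ℝ := ⟨of v, of_mem_orthogonalGroup hv⟩
  let U' : orthogonalGroup (Fin p) ℝ := ⟨of v', of_mem_orthogonalGroup hv'⟩
  have hS : S = spectralCalculus U μ := eq_spectralCalculus_of_mulVec U heig
  have hE : spectralCalculus U' μ' = spectralCalculus U μ + E := by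
    rw [← eq_spectralCalculus_of_mulVec U' heig', ← hS]
  refine norm_remainder_le_of_spectral (spectralCalculus U) (spectralCalculus U')
    (fun f => (norm_spectralCalculus U f).le) (fun f => (norm_spectralCalculus U' f).le) hE
    (abs_sub_le_norm_of_antitone U U' hmono hmono' hE) (s := Δr) (fun j hj => (hΔ j).1 hj) hg
    (fun j hj => hgap j (mt (hΔ j).2 hj)) ?_ ?_ ?_
  · rw [hPr, spectralCalculus_indicator]; simp only [Pi.one_apply, one_smul]; rfl
  · rw [hP'r, spectralCalculus_indicator]; simp only [Pi.one_apply, one_smul]; rfl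
  · rw [← Finset.coe_compl, spectralCalculus_indicator, hCr]; rfl

/-- decomposition of the projector perturbation,
`P̃_r - P_r = L_r(E) + S_r(E)` with `L_r(E) = C_r E P_r + P_r E C_r`,
`C_r = ∑_{s ≠ r} P_s / (λ_r - λ_s)`, and `‖S_r(E)‖ ≤ 14 (‖E‖/ḡ_r)²`. -/
theorem projector_perturbation_decomposition {p : ℕ}
    (S E : Matrix (Fin p) (Fin p) ℝ) (hS : S.IsSymm) (hSpsd : S.PosSemidef) (hE : E.IsSymm)
    (μ μ' : Fin p → ℝ) (v v' : Fin p → Fin p → ℝ)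
    (hv : ∀ i j, v i ⬝ᵥ v j = if i = j then (1 : ℝ) else 0)
    (hv' : ∀ i j, v' i ⬝ᵥ v' j = if i = j then (1 : ℝ) else 0)
    (heig : ∀ j, S.mulVec (v j) = μ j • v j)
    (heig' : ∀ j, (S + E).mulVec (v' j) = μ' j • v' j)
    (hmono : Antitone μ) (hmono' : Antitone μ')
    (lamr : ℝ) (hlamr : ∃ j, μ j = lamr)
    (Δr : Finset (Fin p)) (hΔ : ∀ j, j ∈ Δr ↔ μ j = lamr)
    (g : ℝ) (hg : 0 < g) (hgap : ∀ j, μ j ≠ lamr → g ≤ |μ j - lamr|)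
    (Pr P'r Cr : Matrix (Fin p) (Fin p) ℝ)
    (hPr : Pr = ∑ j ∈ Δr, Matrix.vecMulVec (v j) (v j))
    (hP'r : P'r = ∑ j ∈ Δr, Matrix.vecMulVec (v' j) (v' j))
    (hCr : Cr = ∑ j ∈ Δrᶜ, (lamr - μ j)⁻¹ • Matrix.vecMulVec (v j) (v j)) :
    ‖P'r - Pr - (Cr * E * Pr + Pr * E * Cr)‖ ≤ 14 * (‖E‖ / g) ^ 2 :=
  projector_perturbation_decomposition_general S E μ μ' v v' hv hv' heig heig' hmono hmono' lamr Δr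
    hΔ g hg hgap Pr P'r Cr hPr hP'r hCr
end

section
/- Second-order perturbation expansion: with the notation of the projector perturbation decomposition, S_r(E) = Z_r(E) + R_r(E), where Z_r(E) = P_r E C_r E C_r + C_r E C_r E P_r + C_r E P_r E C_r − P_r E P_r E C_r^2 − P_r E C_r^2 E P_r − C_r^2 E P_r E P_r, the matrix R_r(E) is symmetric, and ‖R_r(E)‖ ≤ 72 (‖E‖/g̅_r)^3. -/
open Matrix Finset
open scoped Matrix.Norms.L2Operator

/-!
Put `A = Σ - λ_r`, let `C̃_r` be the reduced resolvent of `Σ + E` at `λ_r` and `B = (A + E) P̃_r`.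
The ring identities `C_r A = A C_r = P_r - 1`, `A P_r = 0` and their perturbed analogues give exact
formulas `P̃_r - P_r = C̃_r E P_r + P̃_r E C_r - B C_r` and
`C̃_r - C_r = C̃_r E C_r - C̃_r² E P_r - P̃_r E C_r² + B C_r²`. Feeding them into each other writes
`S_r(E) - Z_r(E)` as ten products, each with three factors of size `‖E‖` or `‖E‖ / ḡ_r`.
Weyl's inequality `|λ̃_j - λ_j| ≤ ‖E‖` gives `‖B‖ ≤ ‖E‖` and, when `‖E‖ ≤ 2ḡ_r/5`,
`‖C̃_r‖ ≤ 5 / (3ḡ_r)`. For larger `‖E‖` the crude bound `2 + 2x + 6x²` on `‖S_r‖ + ‖Z_r‖`,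
`x = ‖E‖ / ḡ_r`, is already at most `72x³`.
-/

/-- For `a = Σ - λ_r` and `p = P_r`, `c = C_r` is a reduced resolvent of `a` at `0` (with the sign
making `c * a = p - 1`). -/
structure IsReducedResolvent_s5 {R : Type*} [Ring R] (a p c : R) : Prop where
  proj_mul_self : p * p = p
  proj_mul_comm : p * a = a * p
  res_mul_proj : c * p = 0
  proj_mul_res : p * c = 0
  res_mul : c * a = p - 1
  mul_res : a * c = p - 1

theorem isReducedResolvent_pi {n : Type*} [Fintype n] [DecidableEq n] (μ : n → ℝ) (l : ℝ)
    (s : Finset n) (hs : ∀ j ∉ s, μ j ≠ l) :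
    IsReducedResolvent_s5 (fun j => μ j - l) (fun j => if j ∈ s then 1 else 0)
      (fun j => if j ∈ sᶜ then (l - μ j)⁻¹ else 0) := by
  constructor <;> ext j <;> by_cases hj : j ∈ s <;> simp [hj]
  all_goals field_simp [sub_ne_zero.2 (hs j hj).symm]; ring

namespace IsReducedResolvent_s5

variable {R : Type*} [Ring R]

theorem map {S F : Type*} [Ring S] [FunLike F R S] [RingHomClass F R S] (f : F) {a p c : R}
    (h : IsReducedResolvent_s5 a p c) : IsReducedResolvent_s5 (f a) (f p) (f c) where
  proj_mul_self := by rw [← map_mul, h.proj_mul_self]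
  proj_mul_comm := by rw [← map_mul, ← map_mul, h.proj_mul_comm]
  res_mul_proj := by rw [← map_mul, h.res_mul_proj, map_zero]
  proj_mul_res := by rw [← map_mul, h.proj_mul_res, map_zero]
  res_mul := by rw [← map_mul, h.res_mul, map_sub, map_one]
  mul_res := by rw [← map_mul, h.mul_res, map_sub, map_one]

variable {A E P C P' C' : R}

theorem proj_mul_proj_eq (hAP : A * P = 0) (h' : IsReducedResolvent_s5 (A + E) P' C') :
    P' * P = P + C' * E * P :=
  calc P' * P = (C' * (A + E) + 1) * P := by rw [h'.res_mul, sub_add_cancel]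
    _ = C' * (A * P) + C' * E * P + P := by noncomm_ring
    _ = P + C' * E * P := by rw [hAP, mul_zero, zero_add, add_comm]

theorem proj_sub_proj_eq (h : IsReducedResolvent_s5 A P C) (hAP : A * P = 0)
    (h' : IsReducedResolvent_s5 (A + E) P' C') :
    P' - P = C' * E * P + P' * E * C - (A + E) * P' * C := by
  have hP'P : P' * P = P' + (A + E) * P' * C - P' * E * C :=
    calc P' * P = P' * (A * C + 1) := by rw [h.mul_res, sub_add_cancel]
      _ = P' * (A + E) * C - P' * E * C + P' := by noncomm_ring
      _ = P' + (A + E) * P' * C - P' * E * C := by rw [h'.proj_mul_comm]; abel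
  rw [proj_mul_proj_eq hAP h'] at hP'P
  calc P' - P = (P' + (A + E) * P' * C - P' * E * C) - P - (A + E) * P' * C + P' * E * C := by
        abel
    _ = C' * E * P + P' * E * C - (A + E) * P' * C := by rw [← hP'P]; abel

theorem res_sub_res_eq (h : IsReducedResolvent_s5 A P C) (hAP : A * P = 0)
    (h' : IsReducedResolvent_s5 (A + E) P' C') :
    C' - C = C' * E * C - C' * C' * E * P - P' * E * C * C + (A + E) * P' * C * C := by
  have hC'P : C' * P = -(C' * C' * E * P) :=
    calc C' * P = C' * (P' * P - C' * E * P) := by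
          rw [proj_mul_proj_eq hAP h', add_sub_cancel_right]
      _ = C' * P' * P - C' * C' * E * P := by noncomm_ring
      _ = -(C' * C' * E * P) := by rw [h'.res_mul_proj]; noncomm_ring
  have hP'C : P' * C = P' * E * C * C - (A + E) * P' * C * C :=
    calc P' * C = (P' - P) * C + P * C := by noncomm_ring
      _ = (C' * E * P + P' * E * C - (A + E) * P' * C) * C + 0 := by
        rw [proj_sub_proj_eq h hAP h', h.proj_mul_res]
      _ = C' * E * (P * C) + P' * E * C * C - (A + E) * P' * C * C := by noncomm_ring
      _ = P' * E * C * C - (A + E) * P' * C * C := by rw [h.proj_mul_res]; noncomm_ring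
  have hC'AC : C' * (A * C) = (C' * (A + E) - C' * E) * C := by noncomm_ring
  rw [h.mul_res, h'.res_mul] at hC'AC
  calc C' - C = C' * P - (C' * P - C') - C := by abel
    _ = C' * E * C - C' * C' * E * P - P' * E * C * C + (A + E) * P' * C * C := by
      rw [show C' * P - C' = C' * (P - 1) by noncomm_ring, hC'AC, hC'P,
        show (P' - 1 - C' * E) * C = P' * C - C - C' * E * C by noncomm_ring, hP'C]
      noncomm_ring

theorem mul_proj_eq (h : IsReducedResolvent_s5 A P C) (hAP : A * P = 0)
    (h' : IsReducedResolvent_s5 (A + E) P' C') :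
    (A + E) * P' = P * E * P' + (P' - P) * ((A + E) * P') := by
  have hPA : P * A = 0 := by rw [h.proj_mul_comm, hAP]
  calc (A + E) * P' = P' * ((A + E) * P') := by
        rw [← mul_assoc, h'.proj_mul_comm, mul_assoc, h'.proj_mul_self]
    _ = (P' - P) * ((A + E) * P') + P * E * P' + (P * A) * P' := by noncomm_ring
    _ = P * E * P' + (P' - P) * ((A + E) * P') := by rw [hPA]; noncomm_ring

theorem mul_proj_mul_res_eq (h : IsReducedResolvent_s5 A P C)
    (h' : IsReducedResolvent_s5 (A + E) P' C') :
    (A + E) * P' * C = (A + E) * P' * (P' - P) * C :=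
  calc (A + E) * P' * C = (A + E) * (P' * P') * C := by rw [h'.proj_mul_self]
    _ = (A + E) * P' * (P' - P) * C + (A + E) * P' * (P * C) := by noncomm_ring
    _ = (A + E) * P' * (P' - P) * C := by rw [h.proj_mul_res]; noncomm_ring

end IsReducedResolvent_s5

section Expansion

variable {R : Type*} [Ring R]

def secondOrderTerm (P C E : R) : R :=
  P * E * C * E * C + C * E * C * E * P + C * E * P * E * C
    - P * E * P * E * C ^ 2 - P * E * C ^ 2 * E * P - C ^ 2 * E * P * E * P

def projectorRemainder (P P' C E : R) : R :=
  P' - P - (C * E * P + P * E * C) - secondOrderTerm P C E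

/-- `R_r(E)` written through `Q = P̃_r - P_r`, `D = C̃_r - C_r` and `B = (Σ + E - λ_r) P̃_r`, where
`C̃_r` is the reduced resolvent of `Σ + E` at `λ_r`; every summand is cubic in `E`. -/
def cubicRemainder (P C C' E Q D B : R) : R :=
  D * E * C * E * P + D * E * P * E * C - (D * C' + C * D) * E * P * E * P
    + Q * E * C * E * C - Q * E * C ^ 2 * E * P - P * E * Q * E * C ^ 2 - Q * B * E * C ^ 2
    + B * Q * C ^ 2 * E * P - B * Q * C * E * C + B ^ 2 * Q * C ^ 2

theorem IsReducedResolvent_s5.projectorRemainder_eq {A E P C P' C' : R}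
    (h : IsReducedResolvent_s5 A P C) (hAP : A * P = 0) (h' : IsReducedResolvent_s5 (A + E) P' C') :
    projectorRemainder P P' C E = cubicRemainder P C C' E (P' - P) (C' - C) ((A + E) * P') := by
  have hQ := h.proj_sub_proj_eq hAP h'
  have hD := h.res_sub_res_eq hAP h'
  have hB := h.mul_proj_eq hAP h'
  have hBC := h.mul_proj_mul_res_eq h'
  set Q := P' - P with hQdef
  set D := C' - C with hDdef
  set B := (A + E) * P'
  rw [projectorRemainder]
  have hP' : P' = P + Q := by rw [hQdef]; abel
  have hC' : C' = C + D := by rw [hDdef]; abel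
  have hSr : Q - (C * E * P + P * E * C) = D * E * P + Q * E * C - B * C := by
    conv_lhs => rw [hQ]
    rw [hP', hC']; noncomm_ring
  have hBP' : B * P' = B := by rw [mul_assoc, h'.proj_mul_self]
  -- expand each summand of `hSr` once more: what is not second order is cubic in `E`
  have hDEP : D * E * P = C * E * C * E * P - C ^ 2 * E * P * E * P - P * E * C ^ 2 * E * P
      + D * E * C * E * P - (D * C' + C * D) * E * P * E * P - Q * E * C ^ 2 * E * P
      + B * Q * C ^ 2 * E * P := by
    conv_lhs => rw [hD]
    rw [hBC, hP', hC']; noncomm_ring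
  have hQEC : Q * E * C = C * E * P * E * C + P * E * C * E * C + D * E * P * E * C
      + Q * E * C * E * C - B * Q * C * E * C := by
    conv_lhs => rw [hQ]
    rw [hBC, hP', hC']; noncomm_ring
  have hBC' : B * C = P * E * P * E * C ^ 2 + P * E * Q * E * C ^ 2 + Q * B * E * C ^ 2
      - B ^ 2 * Q * C ^ 2 :=
    calc B * C = B * Q * C := hBC
      _ = B * C' * E * (P * C) + B * P' * E * C ^ 2 - B * (B * C) * C := by
        conv_lhs => rw [hQ]
        noncomm_ring
      _ = B * E * C ^ 2 - B ^ 2 * Q * C ^ 2 := by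
        rw [h.proj_mul_res, hBP', hBC]; noncomm_ring
      _ = P * E * P * E * C ^ 2 + P * E * Q * E * C ^ 2 + Q * B * E * C ^ 2
          - B ^ 2 * Q * C ^ 2 := by
        nth_rewrite 1 [hB]
        rw [hP']; noncomm_ring
  rw [hSr, hDEP, hQEC, hBC', secondOrderTerm, cubicRemainder]
  noncomm_ring

theorem IsSelfAdjoint.projectorRemainder [StarRing R] {E P C P' : R} (hE : IsSelfAdjoint E)
    (hP : IsSelfAdjoint P) (hC : IsSelfAdjoint C) (hP' : IsSelfAdjoint P') :
    IsSelfAdjoint (projectorRemainder P P' C E) := by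
  simp only [IsSelfAdjoint, _root_.projectorRemainder, secondOrderTerm, star_sub, star_add,
    star_mul, star_pow, hE.star_eq, hP.star_eq, hC.star_eq, hP'.star_eq]
  noncomm_ring

end Expansion

section Estimates

variable {R : Type*} [NormedRing R] {A E P C P' C' : R} {s : ℝ}

theorem IsReducedResolvent_s5.norm_proj_sub_proj_le (h : IsReducedResolvent_s5 A P C) (hAP : A * P = 0)
    (h' : IsReducedResolvent_s5 (A + E) P' C') (hP' : ‖P'‖ ≤ 1) (hP : ‖P‖ ≤ 1) (hC : ‖C‖ ≤ s)
    (hC' : ‖C'‖ ≤ 5 / 3 * s) (hB : ‖(A + E) * P'‖ ≤ ‖E‖) : ‖P' - P‖ ≤ 4 * ‖E‖ * s := by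
  have hs : 0 ≤ s := (norm_nonneg _).trans hC
  rw [h.proj_sub_proj_eq hAP h']
  calc _ ≤ 5 / 3 * s * ‖E‖ * 1 + 1 * ‖E‖ * s + ‖E‖ * s := by
        apply_rules [norm_sub_le_of_le, norm_add_le_of_le, norm_mul_le_of_le, le_refl]
    _ ≤ 4 * ‖E‖ * s := by nlinarith [mul_nonneg (norm_nonneg E) hs]

theorem IsReducedResolvent_s5.norm_res_sub_res_le (h : IsReducedResolvent_s5 A P C) (hAP : A * P = 0)
    (h' : IsReducedResolvent_s5 (A + E) P' C') (hP' : ‖P'‖ ≤ 1) (hP : ‖P‖ ≤ 1) (hC : ‖C‖ ≤ s)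
    (hC' : ‖C'‖ ≤ 5 / 3 * s) (hB : ‖(A + E) * P'‖ ≤ ‖E‖) : ‖C' - C‖ ≤ 7 * ‖E‖ * s ^ 2 := by
  have hs : 0 ≤ s := (norm_nonneg _).trans hC
  rw [h.res_sub_res_eq hAP h']
  calc _ ≤ 5 / 3 * s * ‖E‖ * s + 5 / 3 * s * (5 / 3 * s) * ‖E‖ * 1 + 1 * ‖E‖ * s * s
        + ‖E‖ * s * s := by
        apply_rules [norm_sub_le_of_le, norm_add_le_of_le, norm_mul_le_of_le, le_refl]
    _ ≤ 7 * ‖E‖ * s ^ 2 := by nlinarith [mul_nonneg (norm_nonneg E) (sq_nonneg s)]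

theorem norm_cubicRemainder_le {Q D B : R} (hP : ‖P‖ ≤ 1) (hC : ‖C‖ ≤ s)
    (hC' : ‖C'‖ ≤ 5 / 3 * s) (hB : ‖B‖ ≤ ‖E‖) (hQ : ‖Q‖ ≤ 4 * ‖E‖ * s)
    (hD : ‖D‖ ≤ 7 * ‖E‖ * s ^ 2) :
    ‖cubicRemainder P C C' E Q D B‖ ≤ 72 * (‖E‖ * s) ^ 3 := by
  have hs : 0 ≤ s := (norm_nonneg _).trans hC
  have hC2 : ‖C ^ 2‖ ≤ s * s := by rw [sq]; exact norm_mul_le_of_le hC hC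
  have hB2 : ‖B ^ 2‖ ≤ ‖E‖ * ‖E‖ := by rw [sq]; exact norm_mul_le_of_le hB hB
  set e := ‖E‖
  unfold cubicRemainder
  calc _ ≤ 7 * e * s ^ 2 * e * s * e * 1 + 7 * e * s ^ 2 * e * 1 * e * s
        + (7 * e * s ^ 2 * (5 / 3 * s) + s * (7 * e * s ^ 2)) * e * 1 * e * 1
        + 4 * e * s * e * s * e * s + 4 * e * s * e * (s * s) * e * 1
        + 1 * e * (4 * e * s) * e * (s * s) + 4 * e * s * e * e * (s * s)
        + e * (4 * e * s) * (s * s) * e * 1 + e * (4 * e * s) * s * e * s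
        + e * e * (4 * e * s) * (s * s) := by
        apply_rules (maxDepth := 200)
          [norm_sub_le_of_le, norm_add_le_of_le, norm_mul_le_of_le, le_refl]
    _ ≤ 72 * (e * s) ^ 3 := by nlinarith [pow_nonneg (mul_nonneg (norm_nonneg E) hs) 3]

theorem norm_projectorRemainder_le_of_two_fifths_le (hP' : ‖P'‖ ≤ 1) (hP : ‖P‖ ≤ 1)
    (hC : ‖C‖ ≤ s) (hEs : 2 / 5 ≤ ‖E‖ * s) :
    ‖projectorRemainder P P' C E‖ ≤ 72 * (‖E‖ * s) ^ 3 := by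
  have hC2 : ‖C ^ 2‖ ≤ s * s := by rw [sq]; exact norm_mul_le_of_le hC hC
  set e := ‖E‖
  unfold projectorRemainder secondOrderTerm
  calc _ ≤ 1 + 1 + (s * e * 1 + 1 * e * s) + (1 * e * s * e * s + s * e * s * e * 1
        + s * e * 1 * e * s + 1 * e * 1 * e * (s * s) + 1 * e * (s * s) * e * 1
        + s * s * e * 1 * e * 1) := by
        apply_rules (maxDepth := 200)
          [norm_sub_le_of_le, norm_add_le_of_le, norm_mul_le_of_le, le_refl]
    _ = 2 + 2 * (e * s) + 6 * (e * s) ^ 2 := by ring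
    _ ≤ 72 * (e * s) ^ 3 := by nlinarith [sq_nonneg (e * s)]

theorem IsReducedResolvent_s5.norm_projectorRemainder_le (h : IsReducedResolvent_s5 A P C)
    (hAP : A * P = 0) (h' : IsReducedResolvent_s5 (A + E) P' C') (hP' : ‖P'‖ ≤ 1) (hP : ‖P‖ ≤ 1)
    (hC : ‖C‖ ≤ s) (hC' : ‖C'‖ ≤ 5 / 3 * s) (hB : ‖(A + E) * P'‖ ≤ ‖E‖) :
    ‖projectorRemainder P P' C E‖ ≤ 72 * (‖E‖ * s) ^ 3 := by
  rw [h.projectorRemainder_eq hAP h']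
  exact norm_cubicRemainder_le hP hC hC' hB (h.norm_proj_sub_proj_le hAP h' hP' hP hC hC' hB)
    (h.norm_res_sub_res_le hAP h' hP' hP hC hC' hB)

end Estimates

section FrameCalculus

variable {n : Type*} [Fintype n] [DecidableEq n]

/-- `c ↦ uᵀ diag(c) u = ∑ⱼ cⱼ uⱼ uⱼᵀ`: the functional calculus of the orthonormal basis formed
by the rows `uⱼ` of `u`. -/
def frameCalculus (u : unitaryGroup n ℝ) : (n → ℝ) →ₐ[ℝ] Matrix n n ℝ :=
  (AlgHomClass.toAlgHom (Unitary.conjStarAlgAut ℝ (Matrix n n ℝ) (star u))).comp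
    (diagonalAlgHom ℝ)

theorem of_mem_unitaryGroup_of_orthonormal {v : n → n → ℝ}
    (hv : ∀ i j, v i ⬝ᵥ v j = if i = j then (1 : ℝ) else 0) : of v ∈ unitaryGroup n ℝ := by
  rw [mem_unitaryGroup_iff, star_eq_conjTranspose, conjTranspose_eq_transpose_of_trivial]
  ext i j
  simpa [mul_apply, dotProduct, one_apply] using hv i j

variable (u : unitaryGroup n ℝ)

theorem frameCalculus_apply (c : n → ℝ) :
    frameCalculus u c = (u : Matrix n n ℝ)ᵀ * diagonal c * u := by
  simp [frameCalculus, star_eq_conjTranspose]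

theorem norm_frameCalculus (c : n → ℝ) : ‖frameCalculus u c‖ = ‖c‖ := by
  rw [frameCalculus_apply, ← conjTranspose_eq_transpose_of_trivial, ← star_eq_conjTranspose,
    CStarRing.norm_mul_coe_unitary, ← Unitary.coe_star, CStarRing.norm_coe_unitary_mul,
    l2_opNorm_diagonal]

theorem frameCalculus_eq_sum (c : n → ℝ) :
    frameCalculus u c = ∑ j, c j • vecMulVec ((u : Matrix n n ℝ) j) ((u : Matrix n n ℝ) j) := by
  ext i k
  simp only [frameCalculus_apply, mul_apply, transpose_apply, diagonal_apply, Matrix.sum_apply,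
    Matrix.smul_apply, vecMulVec_apply, mul_ite, mul_zero, sum_ite_eq', mem_univ, if_true,
    smul_eq_mul]
  exact sum_congr rfl fun _ _ => by ring

theorem frameCalculus_ite_eq_sum (s : Finset n) (c : n → ℝ) :
    frameCalculus u (fun j => if j ∈ s then c j else 0)
      = ∑ j ∈ s, c j • vecMulVec ((u : Matrix n n ℝ) j) ((u : Matrix n n ℝ) j) := by
  simp_rw [frameCalculus_eq_sum, ite_smul, zero_smul]
  rw [sum_ite_mem, univ_inter]

theorem norm_frameCalculus_le {c : n → ℝ} {m : ℝ} (hm : 0 ≤ m) (hc : ∀ j, |c j| ≤ m) :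
    ‖frameCalculus u c‖ ≤ m := by
  rw [norm_frameCalculus]
  exact (pi_norm_le_iff_of_nonneg hm).2 hc

theorem isSelfAdjoint_frameCalculus (c : n → ℝ) : IsSelfAdjoint (frameCalculus u c) := by
  rw [frameCalculus_apply, ← conjTranspose_eq_transpose_of_trivial, ← star_eq_conjTranspose]
  exact (isHermitian_diagonal c).isSelfAdjoint.conjugate' _

theorem dotProduct_frameCalculus_mulVec (c x : n → ℝ) :
    x ⬝ᵥ (frameCalculus u c *ᵥ x) = ∑ j, c j * ((u : Matrix n n ℝ) j ⬝ᵥ x) ^ 2 := by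
  rw [frameCalculus_apply, ← mulVec_mulVec, ← mulVec_mulVec, dotProduct_mulVec, vecMul_transpose]
  simp only [dotProduct, mulVec_diagonal]
  exact sum_congr rfl fun _ _ => by simp only [mulVec, dotProduct]; ring

theorem sum_dotProduct_sq (x : n → ℝ) : ∑ j, ((u : Matrix n n ℝ) j ⬝ᵥ x) ^ 2 = x ⬝ᵥ x := by
  simpa using (dotProduct_frameCalculus_mulVec u 1 x).symm

theorem eq_frameCalculus_of_mulVec_eq {M : Matrix n n ℝ} {μ : n → ℝ}
    (h : ∀ j, M *ᵥ (u : Matrix n n ℝ) j = μ j • (u : Matrix n n ℝ) j) :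
    M = frameCalculus u μ := by
  have hcols : M * (u : Matrix n n ℝ)ᵀ = (u : Matrix n n ℝ)ᵀ * diagonal μ := by
    ext a j
    simpa [mul_apply, mulVec, dotProduct, diagonal_apply, mul_comm] using congrFun (h j) a
  rw [frameCalculus_apply, ← hcols, mul_assoc, ← conjTranspose_eq_transpose_of_trivial,
    ← star_eq_conjTranspose, mem_unitaryGroup_iff'.mp u.2, mul_one]

end FrameCalculus

theorem Matrix.dotProduct_mulVec_le_l2_opNorm_mul {n : Type*} [Fintype n] [DecidableEq n]
    (E : Matrix n n ℝ) (x : n → ℝ) : x ⬝ᵥ (E *ᵥ x) ≤ ‖E‖ * (x ⬝ᵥ x) := by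
  set y : EuclideanSpace ℝ n := WithLp.toLp 2 x
  have hEx : x ⬝ᵥ (E *ᵥ x) = inner ℝ y (toEuclideanCLM (𝕜 := ℝ) E y) :=
    (inner_toEuclideanCLM E y y).symm
  have hxx : x ⬝ᵥ x = ‖y‖ ^ 2 := by
    rw [← real_inner_self_eq_norm_sq, EuclideanSpace.inner_toLp_toLp, star_trivial]
  rw [hEx, hxx]
  calc inner ℝ y (toEuclideanCLM (𝕜 := ℝ) E y) ≤ ‖y‖ * ‖toEuclideanCLM (𝕜 := ℝ) E y‖ :=
        real_inner_le_norm _ _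
    _ ≤ ‖y‖ * (‖E‖ * ‖y‖) := by gcongr; exact (toEuclideanCLM (𝕜 := ℝ) E).le_opNorm y
    _ = ‖E‖ * ‖y‖ ^ 2 := by ring

theorem exists_ne_zero_dotProduct_eq_zero_of_lt_of_gt {K : Type*} [Field K] {p : ℕ} (k : Fin p)
    (v w : Fin p → Fin p → K) :
    ∃ x ≠ 0, (∀ i < k, v i ⬝ᵥ x = 0) ∧ ∀ i, k < i → w i ⬝ᵥ x = 0 := by
  classical
  let Y : Matrix (Fin p) (Fin p) K := of fun i => if i < k then v i else if k < i then w i else 0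
  have hY : Y.det = 0 := det_eq_zero_of_row_eq_zero k fun j => by simp [Y]
  obtain ⟨x, hx, hYx⟩ := exists_mulVec_eq_zero_iff.mpr hY
  refine ⟨x, hx, fun i hi => ?_, fun i hi => ?_⟩
  · simpa [Y, mulVec, hi] using congrFun hYx i
  · simpa [Y, mulVec, hi, hi.not_gt] using congrFun hYx i

theorem sum_mul_sq_le_mul_sum_sq {ι : Type*} (s : Finset ι) {c y : ι → ℝ} {m : ℝ}
    (h : ∀ j, y j ≠ 0 → c j ≤ m) : ∑ j ∈ s, c j * y j ^ 2 ≤ m * ∑ j ∈ s, y j ^ 2 := by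
  rw [mul_sum]
  refine sum_le_sum fun j _ => ?_
  by_cases hj : y j = 0
  · simp [hj]
  · exact mul_le_mul_of_nonneg_right (h j hj) (sq_nonneg _)

theorem mul_sum_sq_le_sum_mul_sq {ι : Type*} (s : Finset ι) {c y : ι → ℝ} {m : ℝ}
    (h : ∀ j, y j ≠ 0 → m ≤ c j) : m * ∑ j ∈ s, y j ^ 2 ≤ ∑ j ∈ s, c j * y j ^ 2 := by
  simpa [neg_mul, sum_neg_distrib] using
    sum_mul_sq_le_mul_sum_sq s (c := -c) (m := -m) fun j hj => neg_le_neg (h j hj)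

section Weyl

variable {p : ℕ} {M E : Matrix (Fin p) (Fin p) ℝ} {u w : unitaryGroup (Fin p) ℝ} {μ μ' : Fin p → ℝ}

theorem le_add_norm_of_eq_frameCalculus (hM : M = frameCalculus u μ)
    (hME : M + E = frameCalculus w μ') (hμ : Antitone μ) (hμ' : Antitone μ') (k : Fin p) :
    μ' k ≤ μ k + ‖E‖ := by
  obtain ⟨x, hx, hux, hwx⟩ :=
    exists_ne_zero_dotProduct_eq_zero_of_lt_of_gt k (u : Matrix _ _ ℝ) (w : Matrix _ _ ℝ)
  have hxx : 0 < x ⬝ᵥ x := by simpa using dotProduct_star_self_pos_iff.mpr hx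
  have hupper : x ⬝ᵥ (M *ᵥ x) ≤ μ k * (x ⬝ᵥ x) := by
    rw [hM, dotProduct_frameCalculus_mulVec, ← sum_dotProduct_sq u]
    exact sum_mul_sq_le_mul_sum_sq _ fun j hj => hμ (not_lt.1 fun hjk => hj (hux j hjk))
  have hlower : μ' k * (x ⬝ᵥ x) ≤ x ⬝ᵥ ((M + E) *ᵥ x) := by
    rw [hME, dotProduct_frameCalculus_mulVec, ← sum_dotProduct_sq w]
    exact mul_sum_sq_le_sum_mul_sq _ fun j hj => hμ' (not_lt.1 fun hkj => hj (hwx j hkj))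
  rw [add_mulVec, dotProduct_add] at hlower
  have hE := dotProduct_mulVec_le_l2_opNorm_mul E x
  exact le_of_mul_le_mul_right (by linarith) hxx

theorem abs_sub_le_norm_of_eq_frameCalculus (hM : M = frameCalculus u μ)
    (hME : M + E = frameCalculus w μ') (hμ : Antitone μ) (hμ' : Antitone μ') (k : Fin p) :
    |μ' k - μ k| ≤ ‖E‖ := by
  have hMEE : M + E + -E = frameCalculus u μ := by rw [add_neg_cancel_right, hM]
  have h₁ := le_add_norm_of_eq_frameCalculus hM hME hμ hμ' k
  have h₂ := le_add_norm_of_eq_frameCalculus hME hMEE hμ' hμ k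
  rw [norm_neg] at h₂
  exact abs_sub_le_iff.2 ⟨by linarith, by linarith⟩

end Weyl

section SpectralProjector

variable {n : Type*} [Fintype n] [DecidableEq n] (u : unitaryGroup n ℝ)

def spectralProjector (s : Finset n) : Matrix n n ℝ :=
  frameCalculus u fun j => if j ∈ s then 1 else 0

noncomputable def reducedResolvent (μ : n → ℝ) (l : ℝ) (s : Finset n) : Matrix n n ℝ :=
  frameCalculus u fun j => if j ∈ sᶜ then (l - μ j)⁻¹ else 0

theorem sum_vecMulVec_eq_spectralProjector (s : Finset n) :
    ∑ j ∈ s, vecMulVec ((u : Matrix n n ℝ) j) ((u : Matrix n n ℝ) j) = spectralProjector u s := by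
  rw [spectralProjector, frameCalculus_ite_eq_sum]
  simp

theorem sum_smul_vecMulVec_eq_reducedResolvent (μ : n → ℝ) (l : ℝ) (s : Finset n) :
    ∑ j ∈ sᶜ, (l - μ j)⁻¹ • vecMulVec ((u : Matrix n n ℝ) j) ((u : Matrix n n ℝ) j)
      = reducedResolvent u μ l s :=
  (frameCalculus_ite_eq_sum u sᶜ _).symm

theorem norm_spectralProjector_le (s : Finset n) : ‖spectralProjector u s‖ ≤ 1 :=
  norm_frameCalculus_le u zero_le_one fun j => by split_ifs <;> simp

theorem norm_reducedResolvent_le {μ : n → ℝ} {l g : ℝ} {s : Finset n} (hg : 0 < g)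
    (hgap : ∀ j ∉ s, g ≤ |μ j - l|) : ‖reducedResolvent u μ l s‖ ≤ g⁻¹ :=
  norm_frameCalculus_le u (inv_nonneg.2 hg.le) fun j => by
    split_ifs with hj
    · rw [abs_inv, abs_sub_comm]
      exact inv_anti₀ hg (hgap j (mem_compl.1 hj))
    · simpa using hg.le

variable {M : Matrix n n ℝ} {μ : n → ℝ} (hM : M = frameCalculus u μ) (l : ℝ) (s : Finset n)
include hM

theorem sub_algebraMap_eq_frameCalculus :
    M - algebraMap ℝ (Matrix n n ℝ) l = frameCalculus u fun j => μ j - l := by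
  rw [hM, ← AlgHom.commutes (frameCalculus u) l, ← map_sub]
  rfl

theorem isReducedResolvent_reducedResolvent (hs : ∀ j ∉ s, μ j ≠ l) :
    IsReducedResolvent_s5 (M - algebraMap ℝ (Matrix n n ℝ) l) (spectralProjector u s)
      (reducedResolvent u μ l s) := by
  rw [sub_algebraMap_eq_frameCalculus u hM]
  exact (isReducedResolvent_pi μ l s hs).map (frameCalculus u)

theorem norm_sub_algebraMap_mul_spectralProjector_le {e : ℝ} (he : 0 ≤ e)
    (hμ : ∀ j ∈ s, |μ j - l| ≤ e) :
    ‖(M - algebraMap ℝ (Matrix n n ℝ) l) * spectralProjector u s‖ ≤ e := by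
  rw [sub_algebraMap_eq_frameCalculus u hM, spectralProjector, ← map_mul]
  refine norm_frameCalculus_le u he fun j => ?_
  by_cases hj : j ∈ s <;> simp [hj, hμ, he]

theorem sub_algebraMap_mul_spectralProjector_eq_zero (hμ : ∀ j ∈ s, μ j = l) :
    (M - algebraMap ℝ (Matrix n n ℝ) l) * spectralProjector u s = 0 :=
  norm_le_zero_iff.1 <| norm_sub_algebraMap_mul_spectralProjector_le u hM l s le_rfl
    fun j hj => by simp [hμ j hj]

end SpectralProjector

theorem norm_projectorRemainder_le_of_eq_frameCalculus {p : ℕ} {S E : Matrix (Fin p) (Fin p) ℝ}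
    {u w : unitaryGroup (Fin p) ℝ} {μ μ' : Fin p → ℝ} (hS : S = frameCalculus u μ)
    (hSE : S + E = frameCalculus w μ') (hμ : Antitone μ) (hμ' : Antitone μ') {l g : ℝ}
    {s : Finset (Fin p)} (hs : ∀ j, j ∈ s ↔ μ j = l) (hg : 0 < g)
    (hgap : ∀ j ∉ s, g ≤ |μ j - l|) :
    ‖projectorRemainder (spectralProjector u s) (spectralProjector w s) (reducedResolvent u μ l s)
      E‖ ≤ 72 * (‖E‖ * g⁻¹) ^ 3 := by
  have hP := norm_spectralProjector_le u s
  have hP' := norm_spectralProjector_le w s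
  have hC := norm_reducedResolvent_le u hg hgap
  rcases le_or_gt (‖E‖ * g⁻¹) (2 / 5) with hsmall | hlarge
  swap
  · exact norm_projectorRemainder_le_of_two_fifths_le hP' hP hC hlarge.le
  rw [mul_inv_le_iff₀ hg] at hsmall
  have hweyl := abs_sub_le_norm_of_eq_frameCalculus hS hSE hμ hμ'
  have hgap' : ∀ j ∉ s, 3 / 5 * g ≤ |μ' j - l| := fun j hj => by
    linarith [abs_sub_le (μ j) (μ' j) l, abs_sub_comm (μ j) (μ' j), hweyl j, hgap j hj]
  have h := isReducedResolvent_reducedResolvent u hS l s fun j hj heq => hj ((hs j).2 heq)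
  have h' := isReducedResolvent_reducedResolvent w hSE l s fun j hj heq => by
    linarith [hgap' j hj, show |μ' j - l| = 0 by rw [heq, sub_self, abs_zero]]
  have hAP := sub_algebraMap_mul_spectralProjector_eq_zero u hS l s fun j hj => (hs j).1 hj
  have hB := norm_sub_algebraMap_mul_spectralProjector_le w hSE l s (norm_nonneg E)
    fun j hj => (hs j).1 hj ▸ hweyl j
  have hC' : _ ≤ 5 / 3 * g⁻¹ := (norm_reducedResolvent_le w (by positivity) hgap').trans_eq
    (by rw [mul_inv]; norm_num)
  rw [add_sub_right_comm] at h' hB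
  exact h.norm_projectorRemainder_le hAP h' hP' hP hC hC' hB

theorem second_order_perturbation_expansion_general {p : ℕ}
    (S E : Matrix (Fin p) (Fin p) ℝ) (hE : E.IsSymm)
    (μ μ' : Fin p → ℝ) (v v' : Fin p → Fin p → ℝ)
    (hv : ∀ i j, v i ⬝ᵥ v j = if i = j then (1 : ℝ) else 0)
    (hv' : ∀ i j, v' i ⬝ᵥ v' j = if i = j then (1 : ℝ) else 0)
    (heig : ∀ j, S.mulVec (v j) = μ j • v j)
    (heig' : ∀ j, (S + E).mulVec (v' j) = μ' j • v' j)
    (hmono : Antitone μ) (hmono' : Antitone μ')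
    (lamr : ℝ)
    (Δr : Finset (Fin p)) (hΔ : ∀ j, j ∈ Δr ↔ μ j = lamr)
    (g : ℝ) (hg : 0 < g) (hgap : ∀ j, μ j ≠ lamr → g ≤ |μ j - lamr|)
    (Pr P'r Cr Sr Zr Rr : Matrix (Fin p) (Fin p) ℝ)
    (hPr : Pr = ∑ j ∈ Δr, Matrix.vecMulVec (v j) (v j))
    (hP'r : P'r = ∑ j ∈ Δr, Matrix.vecMulVec (v' j) (v' j))
    (hCr : Cr = ∑ j ∈ Δrᶜ, (lamr - μ j)⁻¹ • Matrix.vecMulVec (v j) (v j))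
    (hSr : Sr = P'r - Pr - (Cr * E * Pr + Pr * E * Cr))
    (hZr : Zr = Pr * E * Cr * E * Cr + Cr * E * Cr * E * Pr + Cr * E * Pr * E * Cr
            - Pr * E * Pr * E * Cr ^ 2 - Pr * E * Cr ^ 2 * E * Pr - Cr ^ 2 * E * Pr * E * Pr)
    (hRr : Rr = Sr - Zr) :
    Sr = Zr + Rr ∧ Rr.IsSymm ∧ ‖Rr‖ ≤ 72 * (‖E‖ / g) ^ 3 := by
  let u : unitaryGroup (Fin p) ℝ := ⟨of v, of_mem_unitaryGroup_of_orthonormal hv⟩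
  let w : unitaryGroup (Fin p) ℝ := ⟨of v', of_mem_unitaryGroup_of_orthonormal hv'⟩
  obtain rfl : Pr = spectralProjector u Δr := hPr.trans (sum_vecMulVec_eq_spectralProjector u Δr)
  obtain rfl : P'r = spectralProjector w Δr :=
    hP'r.trans (sum_vecMulVec_eq_spectralProjector w Δr)
  obtain rfl : Cr = reducedResolvent u μ lamr Δr :=
    hCr.trans (sum_smul_vecMulVec_eq_reducedResolvent u μ lamr Δr)
  subst hRr hSr hZr
  refine ⟨by abel, ?_, ?_⟩
  · exact isHermitian_iff_isSymm.1 <| IsSelfAdjoint.projectorRemainder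
      (isHermitian_iff_isSymm.2 hE) (isSelfAdjoint_frameCalculus _ _)
      (isSelfAdjoint_frameCalculus _ _) (isSelfAdjoint_frameCalculus _ _)
  rw [div_eq_mul_inv]
  exact norm_projectorRemainder_le_of_eq_frameCalculus (eq_frameCalculus_of_mulVec_eq u heig)
    (eq_frameCalculus_of_mulVec_eq w heig') hmono hmono' hΔ hg
    fun j hj => hgap j fun h => hj ((hΔ j).2 h)

/-- second-order perturbation expansion `S_r(E) = Z_r(E) + R_r(E)` where
`S_r(E) = P̃_r - P_r - L_r(E)`,
`Z_r(E) = P_r E C_r E C_r + C_r E C_r E P_r + C_r E P_r E C_r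
          - P_r E P_r E C_r² - P_r E C_r² E P_r - C_r² E P_r E P_r`,
and the third-order remainder `R_r(E)` is symmetric with `‖R_r(E)‖ ≤ 72 (‖E‖/ḡ_r)³`. -/
theorem second_order_perturbation_expansion {p : ℕ}
    (S E : Matrix (Fin p) (Fin p) ℝ) (hS : S.IsSymm) (hSpsd : S.PosSemidef) (hE : E.IsSymm)
    (μ μ' : Fin p → ℝ) (v v' : Fin p → Fin p → ℝ)
    (hv : ∀ i j, v i ⬝ᵥ v j = if i = j then (1 : ℝ) else 0)
    (hv' : ∀ i j, v' i ⬝ᵥ v' j = if i = j then (1 : ℝ) else 0)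
    (heig : ∀ j, S.mulVec (v j) = μ j • v j)
    (heig' : ∀ j, (S + E).mulVec (v' j) = μ' j • v' j)
    (hmono : Antitone μ) (hmono' : Antitone μ')
    (lamr : ℝ) (hlamr : ∃ j, μ j = lamr)
    (Δr : Finset (Fin p)) (hΔ : ∀ j, j ∈ Δr ↔ μ j = lamr)
    (g : ℝ) (hg : 0 < g) (hgap : ∀ j, μ j ≠ lamr → g ≤ |μ j - lamr|)
    (Pr P'r Cr Sr Zr Rr : Matrix (Fin p) (Fin p) ℝ)
    (hPr : Pr = ∑ j ∈ Δr, Matrix.vecMulVec (v j) (v j))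
    (hP'r : P'r = ∑ j ∈ Δr, Matrix.vecMulVec (v' j) (v' j))
    (hCr : Cr = ∑ j ∈ Δrᶜ, (lamr - μ j)⁻¹ • Matrix.vecMulVec (v j) (v j))
    (hSr : Sr = P'r - Pr - (Cr * E * Pr + Pr * E * Cr))
    (hZr : Zr = Pr * E * Cr * E * Cr + Cr * E * Cr * E * Pr + Cr * E * Pr * E * Cr
            - Pr * E * Pr * E * Cr ^ 2 - Pr * E * Cr ^ 2 * E * Pr - Cr ^ 2 * E * Pr * E * Pr)
    (hRr : Rr = Sr - Zr) :
    Sr = Zr + Rr ∧ Rr.IsSymm ∧ ‖Rr‖ ≤ 72 * (‖E‖ / g) ^ 3 :=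
  second_order_perturbation_expansion_general S E hE μ μ' v v' hv hv' heig heig' hmono hmono' lamr
    Δr hΔ g hg hgap Pr P'r Cr Sr Zr Rr hPr hP'r hCr hSr hZr hRr
end

section
/- Contour integral bound for the third-order remainder (case ‖E‖ ≤ g̅_r/3): if ‖E‖ ≤ g̅_r/3 then ‖(1/(2πi)) ∮_{γ_r} Σ_{k≥3} (−1)^k (R_Σ(η)E)^k R_Σ(η) dη‖ ≤ 24 (‖E‖/g̅_r)^3, where γ_r is the circle of radius g̅_r/2 centred at λ_r with counterclockwise orientation and R_Σ(η) = Σ_j P_j/(μ_j − η) is the resolvent of Σ. -/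
open Matrix
open scoped Matrix.Norms.L2Operator

/-!
On the circle `|η - λ_r| = ḡ_r/2` every eigenvalue of `Σ` is at distance at least `ḡ_r/2`
from `η`, so diagonalising `Σ` by the orthonormal eigenbasis gives `‖R_Σ(η)‖ ≤ 2/ḡ_r`. Hence the
`k`-th term of the series has norm at most `r^k (2/ḡ_r)` with `r = 2‖E‖/ḡ_r ≤ 2/3`, the series
is bounded by `3 r³ (2/ḡ_r)`, and the estimate of a contour integral by length times sup of the
integrand gives `(ḡ_r/2) · 3 r³ (2/ḡ_r) = 24 (‖E‖/ḡ_r)³`.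
-/

lemma EuclideanSpace.norm_sq_eq_re_add_im {n : Type*} [Fintype n] (x : EuclideanSpace ℂ n) :
    ‖x‖ ^ 2 =
      ‖WithLp.toLp 2 (fun i => (x i).re)‖ ^ 2 + ‖WithLp.toLp 2 (fun i => (x i).im)‖ ^ 2 := by
  rw [EuclideanSpace.norm_sq_eq, EuclideanSpace.norm_sq_eq, EuclideanSpace.norm_sq_eq,
    ← Finset.sum_add_distrib]
  refine Finset.sum_congr rfl fun i _ => ?_
  change ‖x i‖ ^ 2 = ‖(x i).re‖ ^ 2 + ‖(x i).im‖ ^ 2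
  rw [Complex.sq_norm, Complex.normSq_apply, Real.norm_eq_abs, Real.norm_eq_abs, sq_abs, sq_abs]
  ring

namespace Matrix

lemma l2_opNorm_map_ofReal_le {m n : Type*} [Fintype m] [Fintype n] [DecidableEq n]
    (A : Matrix m n ℝ) : ‖A.map ((↑) : ℝ → ℂ)‖ ≤ ‖A‖ := by
  rw [l2_opNorm_def]
  refine ContinuousLinearMap.opNorm_le_bound _ (norm_nonneg A) fun x => ?_
  set a : EuclideanSpace ℝ n := WithLp.toLp 2 (fun i => (x i).re)
  set b : EuclideanSpace ℝ n := WithLp.toLp 2 (fun i => (x i).im)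
  refine (sq_le_sq₀ (norm_nonneg _) (by positivity)).mp ?_
  rw [EuclideanSpace.norm_sq_eq_re_add_im, mul_pow, EuclideanSpace.norm_sq_eq_re_add_im x]
  calc _ = ‖(EuclideanSpace.equiv m ℝ).symm (A *ᵥ a)‖ ^ 2
          + ‖(EuclideanSpace.equiv m ℝ).symm (A *ᵥ b)‖ ^ 2 := by
        congr 3 <;> ext i <;> simp [mulVec, dotProduct, Complex.re_sum, Complex.im_sum, a, b]
    _ ≤ (‖A‖ * ‖a‖) ^ 2 + (‖A‖ * ‖b‖) ^ 2 := by gcongr <;> exact A.l2_opNorm_mulVec _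
    _ = ‖A‖ ^ 2 * (‖a‖ ^ 2 + ‖b‖ ^ 2) := by ring

section Unitary

variable {𝕜 : Type*} [RCLike 𝕜] {n : Type*} [Fintype n] [DecidableEq n]

lemma l2_opNorm_conjTranspose_mul_mul_of_mem_unitaryGroup {U : Matrix n n 𝕜}
    (hU : U ∈ unitaryGroup n 𝕜) (B : Matrix n n 𝕜) : ‖Uᴴ * B * U‖ = ‖B‖ := by
  rw [CStarRing.norm_mul_mem_unitary _ hU]
  exact CStarRing.norm_mem_unitary_mul _ (Unitary.star_mem hU)

lemma inv_conjTranspose_mul_mul_of_mem_unitaryGroup {U : Matrix n n 𝕜}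
    (hU : U ∈ unitaryGroup n 𝕜) (B : Matrix n n 𝕜) : (Uᴴ * B * U)⁻¹ = Uᴴ * B⁻¹ * U := by
  have hUinv : U⁻¹ = Uᴴ := inv_eq_left_inv (Unitary.star_mul_self_of_mem hU)
  have hUHinv : Uᴴ⁻¹ = U := inv_eq_left_inv (Unitary.mul_star_self_of_mem hU)
  rw [mul_inv_rev, mul_inv_rev, hUinv, hUHinv, mul_assoc]

lemma inv_diagonal_of_ne_zero {d : n → 𝕜} (hd : ∀ i, d i ≠ 0) :
    (diagonal d)⁻¹ = diagonal d⁻¹ :=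
  inv_eq_right_inv <| by
    rw [diagonal_mul_diagonal, ← diagonal_one]
    exact congrArg diagonal (funext fun i => mul_inv_cancel₀ (hd i))

lemma l2_opNorm_inv_sub_smul_one_le {U : Matrix n n 𝕜} (hU : U ∈ unitaryGroup n 𝕜) {d : n → 𝕜}
    {z : 𝕜} {c : ℝ} (hc : 0 < c) (hd : ∀ i, c ≤ ‖d i - z‖) :
    ‖(Uᴴ * diagonal d * U - z • 1)⁻¹‖ ≤ c⁻¹ := by
  have hdz (i : n) : d i - z ≠ 0 := norm_pos_iff.mp (hc.trans_le (hd i))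
  have hshift : Uᴴ * diagonal d * U - z • 1 = Uᴴ * diagonal (fun i => d i - z) * U := by
    have hUU : Uᴴ * U = 1 := Unitary.star_mul_self_of_mem hU
    rw [← diagonal_sub, ← smul_one_eq_diagonal, Matrix.mul_sub, Matrix.sub_mul, Matrix.mul_smul,
      Matrix.smul_mul, Matrix.mul_one, hUU]
  rw [hshift, inv_conjTranspose_mul_mul_of_mem_unitaryGroup hU,
    l2_opNorm_conjTranspose_mul_mul_of_mem_unitaryGroup hU, inv_diagonal_of_ne_zero hdz,
    l2_opNorm_diagonal]
  refine (pi_norm_le_iff_of_nonneg (by positivity)).mpr fun i => ?_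
  rw [Pi.inv_apply, norm_inv]
  exact inv_anti₀ hc (hd i)

end Unitary

section Eigenbasis

variable {n : Type*} [Fintype n] [DecidableEq n] {v : n → n → ℝ}

lemma mem_unitaryGroup_map_ofReal_of_orthonormal
    (hv : ∀ i j, v i ⬝ᵥ v j = if i = j then (1 : ℝ) else 0) :
    (of v).map ((↑) : ℝ → ℂ) ∈ unitaryGroup n ℂ := by
  rw [mem_unitaryGroup_iff]
  ext i j
  have h := congrArg ((↑) : ℝ → ℂ) (hv i j)
  simp only [dotProduct, Complex.ofReal_sum, Complex.ofReal_mul] at h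
  simpa [mul_apply, one_apply, apply_ite ((↑) : ℝ → ℂ)] using h

lemma map_ofReal_eq_conjTranspose_mul_diagonal_mul {S : Matrix n n ℝ} {μ : n → ℝ}
    (hv : ∀ i j, v i ⬝ᵥ v j = if i = j then (1 : ℝ) else 0)
    (heig : ∀ j, S *ᵥ v j = μ j • v j) :
    S.map ((↑) : ℝ → ℂ) = ((of v).map (↑))ᴴ * diagonal (fun j => (μ j : ℂ)) * (of v).map (↑) := by
  set W : Matrix n n ℂ := (of v).map (↑)
  have hSW : S.map (↑) * Wᴴ = Wᴴ * diagonal (fun j => (μ j : ℂ)) := by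
    ext i j
    have h := congrArg ((↑) : ℝ → ℂ) (congrFun (heig j) i)
    simp only [mulVec, dotProduct, Complex.ofReal_sum, Complex.ofReal_mul, Pi.smul_apply,
      smul_eq_mul] at h
    rw [mul_diagonal]
    simpa [W, mul_apply, mul_comm] using h
  have hWW : Wᴴ * W = 1 :=
    Unitary.star_mul_self_of_mem (mem_unitaryGroup_map_ofReal_of_orthonormal hv)
  calc S.map (↑) = S.map (↑) * Wᴴ * W := by rw [Matrix.mul_assoc, hWW, Matrix.mul_one]
    _ = _ := by rw [hSW]

end Eigenbasis

end Matrix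

lemma norm_tsum_neg_one_pow_smul_pow_mul_le {𝕜 A : Type*} [NormedField 𝕜] [NormedRing A]
    [NormedAlgebra 𝕜 A] {X R : A} {r : ℝ} {m : ℕ} (hm : 0 < m) (hX : ‖X‖ ≤ r) (hr : r < 1) :
    ‖∑' k : ℕ, (-1 : 𝕜) ^ (k + m) • (X ^ (k + m) * R)‖ ≤ r ^ m * ‖R‖ / (1 - r) := by
  have hr0 : 0 ≤ r := (norm_nonneg X).trans hX
  have hterm (k : ℕ) : ‖(-1 : 𝕜) ^ (k + m) • (X ^ (k + m) * R)‖ ≤ r ^ m * ‖R‖ * r ^ k := by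
    rw [norm_smul, norm_pow, norm_neg, norm_one, one_pow, one_mul]
    calc ‖X ^ (k + m) * R‖ ≤ ‖X‖ ^ (k + m) * ‖R‖ :=
          (norm_mul_le _ _).trans (by gcongr; exact norm_pow_le' X (by omega))
      _ ≤ r ^ (k + m) * ‖R‖ := by gcongr
      _ = r ^ m * ‖R‖ * r ^ k := by ring
  rw [div_eq_mul_inv]
  exact tsum_of_norm_bounded ((hasSum_geometric_of_lt_one hr0 hr).mul_left _) hterm

lemma le_norm_sub_of_mem_sphere {E : Type*} [SeminormedAddCommGroup E] {a z c : E} {g : ℝ}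
    (hz : z ∈ Metric.sphere c (g / 2)) (ha : a = c ∨ g ≤ ‖a - c‖) : g / 2 ≤ ‖a - z‖ := by
  rw [mem_sphere_iff_norm] at hz
  rcases ha with rfl | ha
  · rw [norm_sub_rev, hz]
  · have := norm_sub_norm_le (a - c) (z - c)
    rw [sub_sub_sub_cancel_right, hz] at this
    linarith

lemma l2_opNorm_resolvent_le_of_mem_sphere {n : Type*} [Fintype n] [DecidableEq n]
    {S : Matrix n n ℝ} {μ : n → ℝ} {v : n → n → ℝ}
    (hv : ∀ i j, v i ⬝ᵥ v j = if i = j then (1 : ℝ) else 0)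
    (heig : ∀ j, S *ᵥ v j = μ j • v j) {lamr g : ℝ} (hg : 0 < g)
    (hgap : ∀ j, μ j ≠ lamr → g ≤ |μ j - lamr|) {η : ℂ}
    (hη : η ∈ Metric.sphere (lamr : ℂ) (g / 2)) :
    ‖(S.map ((↑) : ℝ → ℂ) - η • 1)⁻¹‖ ≤ 2 / g := by
  rw [map_ofReal_eq_conjTranspose_mul_diagonal_mul hv heig, ← inv_div]
  refine l2_opNorm_inv_sub_smul_one_le (mem_unitaryGroup_map_ofReal_of_orthonormal hv)
    (by positivity) fun j => le_norm_sub_of_mem_sphere hη ?_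
  refine (eq_or_ne (μ j) lamr).imp (congrArg _) fun hj => ?_
  rw [← Complex.ofReal_sub, Complex.norm_real, Real.norm_eq_abs]
  exact hgap j hj

theorem contour_integral_remainder_bound_general {p : ℕ}
    (S E : Matrix (Fin p) (Fin p) ℝ)
    (μ : Fin p → ℝ) (v : Fin p → Fin p → ℝ)
    (hv : ∀ i j, v i ⬝ᵥ v j = if i = j then (1 : ℝ) else 0)
    (heig : ∀ j, S.mulVec (v j) = μ j • v j)
    (lamr : ℝ)
    (g : ℝ) (hg : 0 < g) (hgap : ∀ j, μ j ≠ lamr → g ≤ |μ j - lamr|)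
    (hEsmall : ‖E‖ ≤ g / 3)
    (RS : ℂ → Matrix (Fin p) (Fin p) ℂ)
    (hRS : ∀ η : ℂ, RS η = (S.map (Complex.ofReal) - η • (1 : Matrix (Fin p) (Fin p) ℂ))⁻¹) :
    ‖(2 * Real.pi * Complex.I)⁻¹ •
        (∮ η in C((lamr : ℂ), g / 2),
          ∑' k : ℕ, (-1 : ℂ) ^ (k + 3) •
            ((RS η * E.map (Complex.ofReal)) ^ (k + 3) * RS η))‖
      ≤ 24 * (‖E‖ / g) ^ 3 := by
  set r := 2 * ‖E‖ / g
  have hr : r ≤ 2 / 3 := by rw [div_le_iff₀ hg]; linarith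
  have hR (η : ℂ) (hη : η ∈ Metric.sphere (lamr : ℂ) (g / 2)) : ‖RS η‖ ≤ 2 / g :=
    hRS η ▸ l2_opNorm_resolvent_le_of_mem_sphere hv heig hg hgap hη
  have hX (η : ℂ) (hη : η ∈ Metric.sphere (lamr : ℂ) (g / 2)) :
      ‖RS η * E.map (↑)‖ ≤ r :=
    calc ‖RS η * E.map (↑)‖ ≤ 2 / g * ‖E‖ :=
          (l2_opNorm_mul _ _).trans (by gcongr; exacts [hR η hη, l2_opNorm_map_ofReal_le E])
      _ = r := by ring
  have hseries (η : ℂ) (hη : η ∈ Metric.sphere (lamr : ℂ) (g / 2)) :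
      ‖∑' k : ℕ, (-1 : ℂ) ^ (k + 3) • ((RS η * E.map (↑)) ^ (k + 3) * RS η)‖
        ≤ r ^ 3 * (2 / g) / (1 - r) :=
    (norm_tsum_neg_one_pow_smul_pow_mul_le three_pos (hX η hη) (by linarith)).trans <|
      div_le_div_of_nonneg_right (by gcongr; exact hR η hη) (by linarith)
  refine (circleIntegral.norm_two_pi_i_inv_smul_integral_le_of_norm_le_const (by positivity)
    hseries).trans ?_
  calc g / 2 * (r ^ 3 * (2 / g) / (1 - r)) = r ^ 3 / (1 - r) := by field_simp
    _ ≤ r ^ 3 / (1 / 3) := by gcongr; linarith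
    _ = 24 * (‖E‖ / g) ^ 3 := by ring

/-- contour integral bound for the third-order remainder. If `‖E‖ ≤ ḡ_r/3` then
`‖(1/(2πi)) ∮_{γ_r} ∑_{k ≥ 3} (-1)^k (R_Σ(η) E)^k R_Σ(η) dη‖ ≤ 24 (‖E‖/ḡ_r)³`,
where `γ_r` is the counterclockwise circle of radius `ḡ_r/2` centred at `λ_r` and
`R_Σ(η) = (Σ - ηI)⁻¹` is the resolvent of `Σ`. -/
theorem contour_integral_remainder_bound {p : ℕ}
    (S E : Matrix (Fin p) (Fin p) ℝ) (hS : S.IsSymm) (hE : E.IsSymm)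
    (μ : Fin p → ℝ) (v : Fin p → Fin p → ℝ)
    (hv : ∀ i j, v i ⬝ᵥ v j = if i = j then (1 : ℝ) else 0)
    (heig : ∀ j, S.mulVec (v j) = μ j • v j)
    (lamr : ℝ) (hlamr : ∃ j, μ j = lamr)
    (g : ℝ) (hg : 0 < g) (hgap : ∀ j, μ j ≠ lamr → g ≤ |μ j - lamr|)
    (hEsmall : ‖E‖ ≤ g / 3)
    (RS : ℂ → Matrix (Fin p) (Fin p) ℂ)
    (hRS : ∀ η : ℂ, RS η = (S.map (Complex.ofReal) - η • (1 : Matrix (Fin p) (Fin p) ℂ))⁻¹) :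
    ‖(2 * Real.pi * Complex.I)⁻¹ •
        (∮ η in C((lamr : ℂ), g / 2),
          ∑' k : ℕ, (-1 : ℂ) ^ (k + 3) •
            ((RS η * E.map (Complex.ofReal)) ^ (k + 3) * RS η))‖
      ≤ 24 * (‖E‖ / g) ^ 3 :=
  contour_integral_remainder_bound_general S E μ v hv heig lamr g hg hgap hEsmall RS hRS
end

section
/- Gaussian expectation of the normalized linear term: let X_1, ..., X_n be i.i.d. N(0, Σ) with Σ symmetric positive definite, E = (1/n)Σ_j X_j X_j^T − Σ, and let P_r be a spectral projector of Σ with rank m_r. Then n·E[‖P_r^⊥ Σ^{−1/2} E Σ^{−1/2} P_r‖_F^2] = m_r (p − m_r), where P_r^⊥ = I − P_r. -/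
/-!
Write `M = (1 - P) Q` and `N = Q P`, so that the matrix in question is `M E N`. Since `Q Σ Q = 1`,
`M Σ N = (1 - P) P = 0`: for every row `a` of `M` and column `b` of `N` the jointly Gaussian
variables `⟪a, X⟫` and `⟪b, X⟫` are uncorrelated, hence independent. The entry `(i, k)` of
`M E N` is therefore `n⁻¹` times a sum of `n` independent centred variables, each of variance
`(M Σ Mᵀ)ᵢᵢ (Nᵀ Σ N)ₖₖ = (1 - P)ᵢᵢ Pₖₖ`. Summing over all entries gives
`n⁻¹ tr (1 - P) tr P = n⁻¹ (p - m) m`.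
-/

open Matrix MeasureTheory ProbabilityTheory

noncomputable def frobNorm {m n : ℕ} (A : Matrix (Fin m) (Fin n) ℝ) : ℝ :=
  Real.sqrt (∑ i, ∑ j, (A i j) ^ 2)

lemma frobNorm_sq {m n : ℕ} (A : Matrix (Fin m) (Fin n) ℝ) :
    frobNorm A ^ 2 = ∑ i, ∑ j, A i j ^ 2 :=
  Real.sq_sqrt (by positivity)

lemma inv_sq_mul_self (x : ℝ) : x⁻¹ ^ 2 * x = x⁻¹ := by
  rcases eq_or_ne x 0 with rfl | hx
  · simp
  · field_simp

section MatrixAlgebra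

variable {α β ι κ : Type*} [Fintype ι] [Fintype κ]

lemma dotProduct_mulVec_comm {S : Matrix ι ι ℝ} (hS : S.IsHermitian) (u w : ι → ℝ) :
    w ⬝ᵥ S *ᵥ u = u ⬝ᵥ S *ᵥ w := by
  rw [dotProduct_comm, ← vecMul_transpose, ← dotProduct_mulVec,
    ← conjTranspose_eq_transpose_of_trivial, hS.eq]

lemma mul_mul_apply_eq_dotProduct_mulVec (A : Matrix α ι ℝ) (S : Matrix ι ι ℝ)
    (B : Matrix ι β ℝ) (i : α) (k : β) : (A * S * B) i k = A i ⬝ᵥ S *ᵥ Bᵀ k := by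
  rw [Matrix.mul_assoc]
  simp [mul_apply, dotProduct, mulVec]

lemma mul_smul_sum_vecMulVec_sub_mul_apply {S : Matrix ι ι ℝ} {M : Matrix α ι ℝ}
    {N : Matrix ι β ℝ} (hMSN : M * S * N = 0) (c : ℝ) (x : κ → ι → ℝ) (i : α) (k : β) :
    (M * (c • ∑ j, vecMulVec (x j) (x j) - S) * N) i k
      = c * ∑ j, (M i ⬝ᵥ x j) * (Nᵀ k ⬝ᵥ x j) := by
  rw [Matrix.mul_sub, Matrix.sub_mul, hMSN, sub_zero, Matrix.mul_smul, Matrix.smul_mul,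
    Matrix.mul_sum, Matrix.sum_mul]
  simp only [mul_vecMulVec, vecMulVec_mul, Matrix.smul_apply, Matrix.sum_apply, vecMulVec_apply,
    smul_eq_mul, vecMul, mulVec, dotProduct_comm (x _)]
  rfl

lemma Matrix.trace_eq_rank_of_isIdempotentElem [DecidableEq ι]
    {P : Matrix ι ι ℝ} (hP : IsIdempotentElem P) : P.trace = P.rank := by
  have h : IsIdempotentElem (toLin' P) := hP.map Matrix.toLinAlgEquiv'
  rw [← trace_toLin'_eq, (LinearMap.IsIdempotentElem.isProj_range _ h).trace]
  rfl

end MatrixAlgebra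

section Whitening

variable {R n : Type*} [CommRing R] [Fintype n] [DecidableEq n] {Q S : Matrix n n R}

lemma mul_mul_eq_one_of_mul_self_eq_inv (hS : IsUnit S) (hQ : Q * Q = S⁻¹) :
    Q * S * Q = 1 :=
  mul_eq_one_comm.1 <| by
    rw [← Matrix.mul_assoc, hQ, Matrix.nonsing_inv_mul _ ((Matrix.isUnit_iff_isUnit_det S).1 hS)]

lemma mul_mul_mul_mul_eq_mul (hQSQ : Q * S * Q = 1) (A B : Matrix n n R) :
    A * Q * S * Q * B = A * B := by
  rw [Matrix.mul_assoc A, Matrix.mul_assoc A, hQSQ, Matrix.mul_one]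

end Whitening

section GaussianVector

variable {Ω ι : Type*} [MeasurableSpace Ω] {μ : Measure Ω} [Fintype ι]

def HasCenteredGaussianLaw (Y : Ω → ι → ℝ) (S : Matrix ι ι ℝ) (μ : Measure Ω) : Prop :=
  ∀ v, HasLaw (fun ω ↦ v ⬝ᵥ Y ω) (gaussianReal 0 (v ⬝ᵥ S *ᵥ v).toNNReal) μ

variable {Y : Ω → ι → ℝ} {S : Matrix ι ι ℝ}

lemma HasCenteredGaussianLaw.hasGaussianLaw_prodMk (hY : HasCenteredGaussianLaw Y S μ)
    (u w : ι → ℝ) : HasGaussianLaw (fun ω ↦ (u ⬝ᵥ Y ω, w ⬝ᵥ Y ω)) μ := by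
  refine ⟨isGaussian_of_isGaussian_map fun L ↦ ?_⟩
  have hL : ∀ ω, L (u ⬝ᵥ Y ω, w ⬝ᵥ Y ω) = (L (1, 0) • u + L (0, 1) • w) ⬝ᵥ Y ω := fun ω ↦ by
    rw [show (u ⬝ᵥ Y ω, w ⬝ᵥ Y ω) = (u ⬝ᵥ Y ω) • ((1 : ℝ), (0 : ℝ)) + (w ⬝ᵥ Y ω) • (0, 1) by simp,
      map_add, map_smul, map_smul, add_dotProduct, smul_dotProduct, smul_dotProduct]
    simp only [smul_eq_mul]
    ring
  rw [AEMeasurable.map_map_of_aemeasurable (by fun_prop)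
    ((hY u).aemeasurable.prodMk (hY w).aemeasurable)]
  simp only [Function.comp_def, hL]
  exact (hY _).hasGaussianLaw.isGaussian_map

lemma HasCenteredGaussianLaw.memLp (hY : HasCenteredGaussianLaw Y S μ) (v : ι → ℝ) {q : ENNReal}
    (hq : q ≠ ⊤) : MemLp (fun ω ↦ v ⬝ᵥ Y ω) q μ :=
  (hY v).hasGaussianLaw.memLp hq

lemma HasCenteredGaussianLaw.integral_dotProduct (hY : HasCenteredGaussianLaw Y S μ)
    (v : ι → ℝ) : μ[fun ω ↦ v ⬝ᵥ Y ω] = 0 := by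
  rw [(hY v).integral_eq, integral_id_gaussianReal]

lemma HasCenteredGaussianLaw.variance_dotProduct (hY : HasCenteredGaussianLaw Y S μ)
    (hS : S.PosSemidef) (v : ι → ℝ) : Var[fun ω ↦ v ⬝ᵥ Y ω; μ] = v ⬝ᵥ S *ᵥ v := by
  rw [(hY v).variance_eq, variance_id_gaussianReal,
    Real.coe_toNNReal _ (by simpa using hS.dotProduct_mulVec_nonneg v)]

lemma HasCenteredGaussianLaw.integral_sq_dotProduct (hY : HasCenteredGaussianLaw Y S μ)
    (hS : S.PosSemidef) (v : ι → ℝ) : ∫ ω, (v ⬝ᵥ Y ω) ^ 2 ∂μ = v ⬝ᵥ S *ᵥ v := by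
  rw [← variance_of_integral_eq_zero (hY v).aemeasurable (hY.integral_dotProduct v),
    hY.variance_dotProduct hS]

lemma HasCenteredGaussianLaw.memLp_two_dotProduct_mul_dotProduct
    (hY : HasCenteredGaussianLaw Y S μ) (u w : ι → ℝ) :
    MemLp (fun ω ↦ (u ⬝ᵥ Y ω) * (w ⬝ᵥ Y ω)) 2 μ := by
  have : ENNReal.HolderTriple 4 4 2 := ⟨by
    rw [← two_mul, show (4 : ENNReal) = 2 * 2 by norm_num, ENNReal.mul_inv (by simp) (by simp),
      ← mul_assoc, ENNReal.mul_inv_cancel (by simp) (by simp), one_mul]⟩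
  exact (hY.memLp w (by simp)).mul (hY.memLp u (by simp)) (p := 4) (q := 4)

variable [IsProbabilityMeasure μ]

lemma HasCenteredGaussianLaw.covariance_dotProduct (hY : HasCenteredGaussianLaw Y S μ)
    (hS : S.PosSemidef) (u w : ι → ℝ) :
    cov[fun ω ↦ u ⬝ᵥ Y ω, fun ω ↦ w ⬝ᵥ Y ω; μ] = u ⬝ᵥ S *ᵥ w := by
  have hsum := variance_fun_add (hY.memLp u (by simp)) (hY.memLp w (by simp))
  simp only [← add_dotProduct, hY.variance_dotProduct hS] at hsum
  rw [mulVec_add, dotProduct_add, add_dotProduct, add_dotProduct,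
    dotProduct_mulVec_comm hS.1 u w] at hsum
  linarith

lemma HasCenteredGaussianLaw.indepFun_dotProduct (hY : HasCenteredGaussianLaw Y S μ)
    (hS : S.PosSemidef) {u w : ι → ℝ} (h : u ⬝ᵥ S *ᵥ w = 0) :
    IndepFun (fun ω ↦ u ⬝ᵥ Y ω) (fun ω ↦ w ⬝ᵥ Y ω) μ :=
  (hY.hasGaussianLaw_prodMk u w).indepFun_of_covariance_eq_zero
    (by rw [hY.covariance_dotProduct hS, h])

lemma HasCenteredGaussianLaw.integral_dotProduct_mul_dotProduct
    (hY : HasCenteredGaussianLaw Y S μ) (hS : S.PosSemidef) (u w : ι → ℝ) :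
    μ[fun ω ↦ (u ⬝ᵥ Y ω) * (w ⬝ᵥ Y ω)] = u ⬝ᵥ S *ᵥ w := by
  have h := covariance_eq_sub (hY.memLp u (by simp)) (hY.memLp w (by simp))
  rw [hY.covariance_dotProduct hS, hY.integral_dotProduct, hY.integral_dotProduct] at h
  simpa using h.symm

lemma HasCenteredGaussianLaw.variance_dotProduct_mul_dotProduct
    (hY : HasCenteredGaussianLaw Y S μ) (hS : S.PosSemidef) {u w : ι → ℝ}
    (h : u ⬝ᵥ S *ᵥ w = 0) :
    Var[fun ω ↦ (u ⬝ᵥ Y ω) * (w ⬝ᵥ Y ω); μ] = (u ⬝ᵥ S *ᵥ u) * (w ⬝ᵥ S *ᵥ w) := by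
  have hsq : IndepFun (fun ω ↦ (u ⬝ᵥ Y ω) ^ 2) (fun ω ↦ (w ⬝ᵥ Y ω) ^ 2) μ :=
    (hY.indepFun_dotProduct hS h).comp (measurable_id.pow_const 2) (measurable_id.pow_const 2)
  rw [variance_of_integral_eq_zero ((hY u).aemeasurable.fun_mul (hY w).aemeasurable)
    (by rw [hY.integral_dotProduct_mul_dotProduct hS, h])]
  simp only [mul_pow]
  rw [hsq.integral_fun_mul_eq_mul_integral
      ((hY u).aemeasurable.pow_const 2).aestronglyMeasurable
      ((hY w).aemeasurable.pow_const 2).aestronglyMeasurable,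
    hY.integral_sq_dotProduct hS, hY.integral_sq_dotProduct hS]

lemma integral_sq_sum_dotProduct_mul_dotProduct {κ : Type*} [Fintype κ] {X : κ → Ω → ι → ℝ}
    (hX : ∀ j, HasCenteredGaussianLaw (X j) S μ) (hind : iIndepFun X μ) (hS : S.PosSemidef)
    {u w : ι → ℝ} (h : u ⬝ᵥ S *ᵥ w = 0) :
    ∫ ω, (∑ j, (u ⬝ᵥ X j ω) * (w ⬝ᵥ X j ω)) ^ 2 ∂μ
      = Fintype.card κ * ((u ⬝ᵥ S *ᵥ u) * (w ⬝ᵥ S *ᵥ w)) := by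
  set ξ : κ → Ω → ℝ := fun j ω ↦ (u ⬝ᵥ X j ω) * (w ⬝ᵥ X j ω)
  have hφ : Measurable fun x : ι → ℝ ↦ (u ⬝ᵥ x) * (w ⬝ᵥ x) :=
    ((continuous_const.dotProduct continuous_id).mul
      (continuous_const.dotProduct continuous_id)).measurable
  have hξ : ∀ j, MemLp (ξ j) 2 μ := fun j ↦ (hX j).memLp_two_dotProduct_mul_dotProduct u w
  have hmean : μ[∑ j, ξ j] = 0 := by
    rw [Finset.sum_fn, integral_finsetSum _ fun j _ ↦ (hξ j).integrable one_le_two]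
    exact Finset.sum_eq_zero fun j _ ↦ by
      rw [(hX j).integral_dotProduct_mul_dotProduct hS, h]
  calc ∫ ω, (∑ j, ξ j ω) ^ 2 ∂μ
      = Var[∑ j, ξ j; μ] := by
        rw [variance_of_integral_eq_zero
          (Finset.aemeasurable_sum _ fun j _ ↦ (hξ j).aemeasurable) hmean, Finset.sum_fn]
    _ = ∑ j, Var[ξ j; μ] := IndepFun.variance_sum (fun j _ ↦ hξ j)
        fun j _ j' _ hne ↦ (hind.indepFun hne).comp hφ hφ
    _ = Fintype.card κ * ((u ⬝ᵥ S *ᵥ u) * (w ⬝ᵥ S *ᵥ w)) := by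
        rw [Finset.sum_congr rfl fun j _ ↦ (hX j).variance_dotProduct_mul_dotProduct hS h,
          Finset.sum_const, Finset.card_univ, nsmul_eq_mul]

end GaussianVector

theorem integral_frobNorm_sq_mul_sampleCov_sub_mul {Ω ι : Type*} [MeasurableSpace Ω]
    {μ : Measure Ω} [IsProbabilityMeasure μ] [Fintype ι] {a b n : ℕ} {S : Matrix ι ι ℝ}
    (hS : S.PosSemidef) {X : Fin n → Ω → ι → ℝ} (hX : ∀ j, HasCenteredGaussianLaw (X j) S μ)
    (hind : iIndepFun X μ) {M : Matrix (Fin a) ι ℝ} {N : Matrix ι (Fin b) ℝ}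
    (hMSN : M * S * N = 0) :
    ∫ ω, frobNorm (M * ((n : ℝ)⁻¹ • ∑ j, vecMulVec (X j ω) (X j ω) - S) * N) ^ 2 ∂μ
      = (n : ℝ)⁻¹ * ((M * S * Mᵀ).trace * (Nᵀ * S * N).trace) := by
  have hint : ∀ i k, Integrable (fun ω ↦ (∑ j, (M i ⬝ᵥ X j ω) * (Nᵀ k ⬝ᵥ X j ω)) ^ 2) μ :=
    fun i k ↦ (memLp_finsetSum _
      fun j _ ↦ (hX j).memLp_two_dotProduct_mul_dotProduct (M i) (Nᵀ k)).integrable_sq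
  have hcov : ∀ i k, M i ⬝ᵥ S *ᵥ Nᵀ k = 0 := fun i k ↦ by
    rw [← mul_mul_apply_eq_dotProduct_mulVec, hMSN, Matrix.zero_apply]
  simp_rw [frobNorm_sq, mul_smul_sum_vecMulVec_sub_mul_apply hMSN, mul_pow]
  rw [integral_finsetSum _ fun i _ ↦ integrable_finsetSum _ fun k _ ↦ (hint i k).const_mul _]
  simp_rw [integral_finsetSum _ fun k _ ↦ (hint _ k).const_mul _, integral_const_mul,
    integral_sq_sum_dotProduct_mul_dotProduct hX hind hS (hcov _ _), Fintype.card_fin]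
  simp only [trace, diag, mul_mul_apply_eq_dotProduct_mulVec, transpose_transpose]
  rw [Finset.sum_mul_sum, Finset.mul_sum]
  refine Finset.sum_congr rfl fun i _ ↦ ?_
  rw [Finset.mul_sum]
  refine Finset.sum_congr rfl fun k _ ↦ ?_
  rw [← mul_assoc, inv_sq_mul_self]

theorem gaussian_expectation_normalized_linear_term_general {p n : ℕ} (hn : 0 < n) (mr : ℕ)
    {Ω : Type*} [MeasurableSpace Ω] (μ : Measure Ω) [IsProbabilityMeasure μ]
    (Sig : Matrix (Fin p) (Fin p) ℝ) (hSigpd : Sig.PosDef)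
    (X : Fin n → Ω → Fin p → ℝ) (hXmeas : ∀ j, Measurable (X j))
    -- the `X_j` are independent, each centred Gaussian with covariance `Σ`
    (hindep : iIndepFun X μ)
    (hXgauss : ∀ (j : Fin n) (v : Fin p → ℝ),
      Measure.map (fun ω => v ⬝ᵥ X j ω) μ = gaussianReal 0 (Real.toNNReal (v ⬝ᵥ Sig.mulVec v)))
    (Pr : Matrix (Fin p) (Fin p) ℝ)
    (hPsymm : Pr.IsSymm) (hPidem : Pr * Pr = Pr)
    (hrank : Pr.rank = mr)
    -- `Q = Σ^{-1/2}`, the positive square root of `Σ⁻¹`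
    (Q : Matrix (Fin p) (Fin p) ℝ) (hQpd : Q.PosDef) (hQ : Q * Q = Sig⁻¹)
    (E : Ω → Matrix (Fin p) (Fin p) ℝ)
    (hE : ∀ ω, E ω = (n : ℝ)⁻¹ • (∑ j, Matrix.vecMulVec (X j ω) (X j ω)) - Sig) :
    (n : ℝ) * (∫ ω, frobNorm ((1 - Pr) * Q * E ω * Q * Pr) ^ 2 ∂μ)
      = (mr : ℝ) * ((p : ℝ) - (mr : ℝ)) := by
  have hP : IsIdempotentElem Pr := hPidem
  have hQSQ := mul_mul_eq_one_of_mul_self_eq_inv hSigpd.isUnit hQ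
  have hQt : Qᵀ = Q := (isHermitian_iff_isSymm.1 hQpd.isHermitian).eq
  have hX : ∀ j, HasCenteredGaussianLaw (X j) Sig μ := fun j v ↦
    ⟨((continuous_const.dotProduct continuous_id).measurable.comp (hXmeas j)).aemeasurable,
      hXgauss j v⟩
  have hshape : ∀ ω, (1 - Pr) * Q * E ω * Q * Pr
      = (1 - Pr) * Q * ((n : ℝ)⁻¹ • ∑ j, vecMulVec (X j ω) (X j ω) - Sig) * (Q * Pr) :=
    fun ω ↦ by rw [hE ω, Matrix.mul_assoc _ Q Pr]
  have hcross : (1 - Pr) * Q * Sig * (Q * Pr) = 0 := by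
    rw [← Matrix.mul_assoc, mul_mul_mul_mul_eq_mul hQSQ, hP.one_sub_mul_self]
  simp_rw [hshape, integral_frobNorm_sq_mul_sampleCov_sub_mul hSigpd.posSemidef hX hindep hcross]
  simp only [transpose_mul, hQt, transpose_sub, transpose_one, hPsymm.eq, ← Matrix.mul_assoc,
    mul_mul_mul_mul_eq_mul hQSQ]
  rw [hP.one_sub.eq, hP.eq, trace_sub, trace_one, Fintype.card_fin,
    trace_eq_rank_of_isIdempotentElem hP, hrank]
  field_simp

/-- Gaussian expectation of the normalized linear term. For `X_1, ..., X_n`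
i.i.d. `N(0, Σ)` (`Σ` positive definite), `E = (1/n) ∑_j X_j X_jᵀ - Σ`, a spectral projector
`P_r` of `Σ` (for the eigenvalue `λ_r`) of rank `m_r`, and `Q = Σ^{-1/2}`:
`n E[‖P_r^⊥ Σ^{-1/2} E Σ^{-1/2} P_r‖_F²] = m_r (p - m_r)`. -/
theorem gaussian_expectation_normalized_linear_term {p n : ℕ} (hn : 0 < n) (mr : ℕ)
    {Ω : Type*} [MeasurableSpace Ω] (μ : Measure Ω) [IsProbabilityMeasure μ]
    (Sig : Matrix (Fin p) (Fin p) ℝ) (hSig : Sig.IsSymm) (hSigpd : Sig.PosDef)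
    (X : Fin n → Ω → Fin p → ℝ) (hXmeas : ∀ j, Measurable (X j))
    -- the `X_j` are independent, each centred Gaussian with covariance `Σ`
    (hindep : iIndepFun X μ)
    (hXgauss : ∀ (j : Fin n) (v : Fin p → ℝ),
      Measure.map (fun ω => v ⬝ᵥ X j ω) μ = gaussianReal 0 (Real.toNNReal (v ⬝ᵥ Sig.mulVec v)))
    (lamr : ℝ)
    (Pr : Matrix (Fin p) (Fin p) ℝ)
    (hPsymm : Pr.IsSymm) (hPidem : Pr * Pr = Pr)
    (hspec : Sig * Pr = lamr • Pr)
    (hrank : Pr.rank = mr)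
    -- `Q = Σ^{-1/2}`, the positive square root of `Σ⁻¹`
    (Q : Matrix (Fin p) (Fin p) ℝ) (hQpd : Q.PosDef) (hQ : Q * Q = Sig⁻¹)
    (E : Ω → Matrix (Fin p) (Fin p) ℝ)
    (hE : ∀ ω, E ω = (n : ℝ)⁻¹ • (∑ j, Matrix.vecMulVec (X j ω) (X j ω)) - Sig) :
    (n : ℝ) * (∫ ω, frobNorm ((1 - Pr) * Q * E ω * Q * Pr) ^ 2 ∂μ)
      = (mr : ℝ) * ((p : ℝ) - (mr : ℝ)) :=
  gaussian_expectation_normalized_linear_term_general hn mr μ Sig hSigpd X hXmeas hindep hXgauss Pr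
    hPsymm hPidem hrank Q hQpd hQ E hE
end

section
/- Norm bound for inverse square root perturbation: let A and B be symmetric positive definite matrices with smallest eigenvalues λ_min(A) > 0, and suppose ‖A^{−1}‖·‖B − A‖ ≤ 1/2. Then ‖B^{−1/2} − A^{−1/2}‖ ≤ C · λ_min(A)^{−1/2} · ‖A^{−1}‖ ‖B − A‖ / (1 − ‖A^{−1}‖‖B − A‖) for an absolute constant C, via the convergent series expansion of (A B^{−1})^{1/2} around the identity. -/
/-!
Let `Δ = SB - SA` and let `v` be a unit eigenvector of `Δ` whose eigenvalue `μ` satisfies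
`|μ| = ‖Δ‖`. Since `B⁻¹ - A⁻¹ = SB Δ + Δ SA`, the quadratic form of `B⁻¹ - A⁻¹` at `v` equals
`μ (⟪SA v, v⟫ + ⟪SB v, v⟫)`. On the other hand `B⁻¹ - A⁻¹ = SB² (A - B) SA²`, so by
Cauchy–Schwarz and `‖S v‖² ≤ ‖S‖ ⟪S v, v⟫` for positive `S`, the same quantity is at most
`‖A - B‖ M³ (⟪SA v, v⟫ + ⟪SB v, v⟫) / 2` as soon as `‖SA‖, ‖SB‖ ≤ M`. Hence
`‖SB - SA‖ ≤ ‖B - A‖ M³ / 2`. Because `λ_min(B) ≥ λ_min(A) - ‖B - A‖ ≥ λ_min(A) / 2`, one may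
take `M = (2 / λ_min(A))^{1/2}`, and `‖A⁻¹‖ ≥ 1 / λ_min(A)` turns this into the bound with `C = 2`.
-/

open Matrix
open scoped Matrix.Norms.L2Operator RealInnerProductSpace

section NormedSpace

variable {𝕜 E : Type*} [NontriviallyNormedField 𝕜] [NormedAddCommGroup E] [NormedSpace 𝕜 E]

theorem ContinuousLinearMap.one_le_norm_mul_norm_of_mul_eq_one {T U : E →L[𝕜] E}
    (hUT : U * T = 1) {μ : 𝕜} {x : E} (hx : x ≠ 0) (hTx : T x = μ • x) : 1 ≤ ‖μ‖ * ‖U‖ := by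
  have hx' : x = μ • U x := by
    rw [← map_smul, ← hTx, ← mul_apply_eq_comp, hUT, one_apply_eq_self]
  have hle : 1 * ‖x‖ ≤ ‖μ‖ * ‖U‖ * ‖x‖ :=
    calc 1 * ‖x‖ = ‖μ‖ * ‖U x‖ := by rw [one_mul, ← norm_smul, ← hx']
      _ ≤ ‖μ‖ * (‖U‖ * ‖x‖) := by gcongr; exact U.le_opNorm x
      _ = ‖μ‖ * ‖U‖ * ‖x‖ := by ring
  exact le_of_mul_le_mul_right hle (norm_pos_iff.mpr hx)

end NormedSpace

section InnerProductSpace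

variable {E : Type*} [NormedAddCommGroup E] [InnerProductSpace ℝ E]

theorem IsSelfAdjoint.exists_eigenvector_abs_eq_norm [FiniteDimensional ℝ E] [Nontrivial E]
    {T : E →L[ℝ] E} (hT : IsSelfAdjoint T) :
    ∃ v : E, ∃ μ : ℝ, ‖v‖ = 1 ∧ T v = μ • v ∧ |μ| = ‖T‖ := by
  rcases eq_or_ne T 0 with rfl | hT0
  · obtain ⟨v, hv⟩ := exists_norm_eq E zero_le_one
    exact ⟨v, 0, hv, by simp, by simp⟩
  have hρ := T.spectralRadius_eq_nnnorm hT
  have hne : (spectrum ℝ T).Nonempty := by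
    by_contra h
    rw [Set.not_nonempty_iff_eq_empty] at h
    rw [spectralRadius, h] at hρ
    exact hT0 (by simpa using hρ.symm)
  obtain ⟨μ, hμ, hμρ⟩ := spectrum.exists_nnnorm_eq_spectralRadius_of_nonempty hne
  rw [ContinuousLinearMap.spectrum_eq, ← Module.End.hasEigenvalue_iff_mem_spectrum] at hμ
  obtain ⟨w, hw⟩ := hμ.exists_hasEigenvector
  refine ⟨‖w‖⁻¹ • w, μ, norm_smul_inv_norm hw.2, ?_, ?_⟩
  · rw [map_smul, show T w = μ • w from hw.apply_eq_smul, smul_comm]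
  · rw [hρ] at hμρ
    simpa [← Real.norm_eq_abs] using congrArg NNReal.toReal (ENNReal.coe_injective hμρ)

namespace ContinuousLinearMap

theorem sub_norm_sub_mul_norm_sq_le_inner {S T : E →L[ℝ] E} {c : ℝ}
    (hS : ∀ x, c * ‖x‖ ^ 2 ≤ ⟪S x, x⟫) (x : E) : (c - ‖T - S‖) * ‖x‖ ^ 2 ≤ ⟪T x, x⟫ := by
  have h : |⟪(T - S) x, x⟫| ≤ ‖T - S‖ * ‖x‖ ^ 2 :=
    calc |⟪(T - S) x, x⟫| ≤ ‖(T - S) x‖ * ‖x‖ := abs_real_inner_le_norm _ _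
      _ ≤ ‖T - S‖ * ‖x‖ * ‖x‖ := by gcongr; exact (T - S).le_opNorm x
      _ = ‖T - S‖ * ‖x‖ ^ 2 := by ring
  rw [_root_.sub_apply, inner_sub_left] at h
  linarith [hS x, neg_abs_le (⟪T x, x⟫ - ⟪S x, x⟫)]

theorem norm_le_inv_of_mul_eq_one {T U : E →L[ℝ] E} {c : ℝ} (hc : 0 < c)
    (hT : ∀ x, c * ‖x‖ ^ 2 ≤ ⟪T x, x⟫) (hTU : T * U = 1) : ‖U‖ ≤ c⁻¹ := by
  refine U.opNorm_le_bound (inv_nonneg.mpr hc.le) fun y ↦ ?_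
  have hy : T (U y) = y := by rw [← mul_apply_eq_comp, hTU, one_apply_eq_self]
  have h : c * ‖U y‖ ^ 2 ≤ ‖y‖ * ‖U y‖ := by
    have := hT (U y)
    rw [hy] at this
    exact this.trans (real_inner_le_norm y (U y))
  rw [inv_mul_eq_div, le_div_iff₀ hc]
  rcases (norm_nonneg (U y)).eq_or_lt with h0 | h0
  · rw [← h0, zero_mul]
    exact norm_nonneg y
  · nlinarith

theorem IsPositive.inner_sq_le {T : E →L[ℝ] E} (hT : T.IsPositive) (x y : E) :
    ⟪T x, y⟫ ^ 2 ≤ ⟪T x, x⟫ * ⟪T y, y⟫ := by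
  have hsymm : ⟪T y, x⟫ = ⟪T x, y⟫ := by
    rw [hT.inner_left_eq_inner_right, real_inner_comm]
  have hquad : ∀ t : ℝ, 0 ≤ ⟪T y, y⟫ * (t * t) + 2 * ⟪T x, y⟫ * t + ⟪T x, x⟫ := fun t ↦ by
    have := hT.inner_nonneg_left (x + t • y)
    simp only [map_add, map_smul, inner_add_left, inner_add_right, inner_smul_left,
      inner_smul_right, RCLike.conj_to_real, hsymm] at this
    linarith
  have := discrim_le_zero hquad
  rw [discrim] at this
  linarith

theorem IsPositive.norm_apply_sq_le {T : E →L[ℝ] E} (hT : T.IsPositive) (x : E) :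
    ‖T x‖ ^ 2 ≤ ‖T‖ * ⟪T x, x⟫ := by
  rcases eq_or_ne (T x) 0 with h | h
  · simp [h]
  have hpos : 0 < ‖T x‖ ^ 2 := by positivity
  have hCS := hT.inner_sq_le x (T x)
  rw [real_inner_self_eq_norm_sq] at hCS
  have hTT : ⟪T (T x), T x⟫ ≤ ‖T‖ * ‖T x‖ ^ 2 :=
    calc ⟪T (T x), T x⟫ ≤ ‖T (T x)‖ * ‖T x‖ := real_inner_le_norm _ _
      _ ≤ ‖T‖ * ‖T x‖ * ‖T x‖ := by gcongr; exact T.le_opNorm _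
      _ = ‖T‖ * ‖T x‖ ^ 2 := by ring
  nlinarith [mul_le_mul_of_nonneg_left hTT (hT.inner_nonneg_left x)]

theorem norm_sub_le_of_mul_self_sub_mul_self_eq [FiniteDimensional ℝ E] {S T D : E →L[ℝ] E}
    (hS : S.IsPositive) (hT : T.IsPositive) {M : ℝ} (hSM : ‖S‖ ≤ M) (hTM : ‖T‖ ≤ M)
    (hD : T * T - S * S = T * T * D * (S * S)) :
    ‖T - S‖ ≤ ‖D‖ * M ^ 3 / 2 := by
  have hM : 0 ≤ M := (norm_nonneg S).trans hSM
  rcases subsingleton_or_nontrivial E with hE | hE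
  · rw [Subsingleton.elim (T - S) 0, norm_zero]
    positivity
  have hΔ : IsSelfAdjoint (T - S) := hT.isSelfAdjoint.sub hS.isSelfAdjoint
  obtain ⟨v, μ, hv, hμ, hμT⟩ := hΔ.exists_eigenvector_abs_eq_norm
  set α := ⟪S v, v⟫
  set β := ⟪T v, v⟫
  have hα : 0 ≤ α := hS.inner_nonneg_left v
  have hβ : 0 ≤ β := hT.inner_nonneg_left v
  have hμ_eq : μ = β - α := by
    have := congrArg (⟪·, v⟫) hμ
    simp only [_root_.sub_apply, inner_sub_left, inner_smul_left, real_inner_self_eq_norm_sq, hv,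
      one_pow, mul_one, RCLike.conj_to_real] at this
    linarith
  have hquad : ⟪(T * T - S * S) v, v⟫ = μ * (α + β) := by
    have hsplit : T * T - S * S = T * (T - S) + (T - S) * S := by noncomm_ring
    have hsymm : ⟪(T - S) (S v), v⟫ = ⟪S v, (T - S) v⟫ := hΔ.isSymmetric _ _
    rw [hsplit, _root_.add_apply, inner_add_left, mul_apply_eq_comp, mul_apply_eq_comp,
      hsymm, hμ, map_smul, inner_smul_left, inner_smul_right, RCLike.conj_to_real]
    ring
  have hbound : |⟪(T * T - S * S) v, v⟫| ≤ ‖D‖ * M ^ 3 / 2 * (α + β) := by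
    have hSv : ‖S v‖ ^ 2 ≤ M * α := (hS.norm_apply_sq_le v).trans (by gcongr)
    have hTv : ‖T v‖ ^ 2 ≤ M * β := (hT.norm_apply_sq_le v).trans (by gcongr)
    have hTTv : ‖T (T v)‖ ≤ M * ‖T v‖ := (T.le_opNorm _).trans (by gcongr)
    have hDSSv : ‖D (S (S v))‖ ≤ ‖D‖ * (M * ‖S v‖) :=
      (D.le_opNorm _).trans (by gcongr; exact (S.le_opNorm _).trans (by gcongr))
    rw [hD, mul_apply_eq_comp, mul_apply_eq_comp, mul_apply_eq_comp,
      hT.inner_left_eq_inner_right, hT.inner_left_eq_inner_right]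
    calc |⟪D (S (S v)), T (T v)⟫|
        ≤ ‖D (S (S v))‖ * ‖T (T v)‖ := abs_real_inner_le_norm _ _
      _ ≤ ‖D‖ * (M * ‖S v‖) * (M * ‖T v‖) := by gcongr
      _ ≤ ‖D‖ * M ^ 2 * ((‖S v‖ ^ 2 + ‖T v‖ ^ 2) / 2) := by
        have : 0 ≤ ‖D‖ * M ^ 2 := by positivity
        nlinarith [mul_nonneg this (sq_nonneg (‖S v‖ - ‖T v‖))]
      _ ≤ ‖D‖ * M ^ 2 * ((M * α + M * β) / 2) := by gcongr
      _ = ‖D‖ * M ^ 3 / 2 * (α + β) := by ring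
  have hK : 0 ≤ ‖D‖ * M ^ 3 / 2 := by positivity
  -- `|μ| ≤ α + β` settles the case `α + β = 0`, where `hbound` cannot be divided by `α + β`
  have hμαβ : |μ| ≤ α + β := by rw [hμ_eq, abs_le]; constructor <;> linarith
  rw [hquad, abs_mul, abs_of_nonneg (add_nonneg hα hβ)] at hbound
  rw [← hμT]
  nlinarith [abs_nonneg μ]

end ContinuousLinearMap

end InnerProductSpace

namespace Matrix

variable {n : Type*} [Fintype n] [DecidableEq n]

theorem PosSemidef.isPositive_toEuclideanCLM {A : Matrix n n ℝ} (hA : A.PosSemidef) :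
    (toEuclideanCLM (n := n) (𝕜 := ℝ) A).IsPositive :=
  (ContinuousLinearMap.isPositive_toLinearMap_iff _).mp (isPositive_toEuclideanLin_iff.mpr hA)

open scoped MatrixOrder in
theorem IsHermitian.mul_norm_sq_le_inner_toEuclideanCLM {A : Matrix n n ℝ}
    (hA : A.IsHermitian) {c : ℝ} (hc : ∀ (μ : ℝ) (v : n → ℝ), v ≠ 0 → A *ᵥ v = μ • v → c ≤ μ)
    (x : EuclideanSpace ℝ n) : c * ‖x‖ ^ 2 ≤ ⟪toEuclideanCLM (𝕜 := ℝ) A x, x⟫ := by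
  have hle : algebraMap ℝ _ c ≤ A := by
    rw [algebraMap_le_iff_le_spectrum (a := A) hA.isSelfAdjoint]
    intro μ hμ
    rw [← spectrum_toLin', ← Module.End.hasEigenvalue_iff_mem_spectrum] at hμ
    obtain ⟨v, hv⟩ := hμ.exists_hasEigenvector
    exact hc μ v hv.2 (by simpa using hv.apply_eq_smul)
  have hpos := (le_iff.mp hle).isPositive_toEuclideanCLM.inner_nonneg_left x
  rw [map_sub, AlgHomClass.commutes] at hpos
  simpa [inner_sub_left, inner_smul_left, real_inner_self_eq_norm_sq] using hpos

theorem one_le_norm_mul_norm_inv_of_mulVec_eq_smul {A : Matrix n n ℝ} (hA : IsUnit A)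
    {μ : ℝ} {v : n → ℝ} (hv : v ≠ 0) (hAv : A *ᵥ v = μ • v) : 1 ≤ ‖μ‖ * ‖A⁻¹‖ := by
  refine ContinuousLinearMap.one_le_norm_mul_norm_of_mul_eq_one (T := toEuclideanCLM (𝕜 := ℝ) A)
    (U := toEuclideanCLM (𝕜 := ℝ) A⁻¹) (x := WithLp.toLp 2 v) ?_ (by simpa using hv) ?_
  · rw [← map_mul, nonsing_inv_mul A ((isUnit_iff_isUnit_det A).mp hA), map_one]
  · simp [hAv]

theorem norm_inv_le_of_mul_norm_sq_le_inner {A : Matrix n n ℝ} {c : ℝ} (hc : 0 < c)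
    (h : ∀ x, c * ‖x‖ ^ 2 ≤ ⟪toEuclideanCLM (𝕜 := ℝ) A x, x⟫) : ‖A⁻¹‖ ≤ c⁻¹ := by
  by_cases hA : IsUnit A.det
  · exact ContinuousLinearMap.norm_le_inv_of_mul_eq_one (U := toEuclideanCLM (𝕜 := ℝ) A⁻¹) hc h
      (by rw [← map_mul, mul_nonsing_inv A hA, map_one])
  · rw [nonsing_inv_apply_not_isUnit A hA, norm_zero]
    positivity

theorem IsHermitian.norm_inv_le_of_norm_sub_lt {A B : Matrix n n ℝ} (hA : A.IsHermitian) {c : ℝ}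
    (hc : ∀ (μ : ℝ) (v : n → ℝ), v ≠ 0 → A *ᵥ v = μ • v → c ≤ μ) (hBA : ‖B - A‖ < c) :
    ‖B⁻¹‖ ≤ (c - ‖B - A‖)⁻¹ :=
  norm_inv_le_of_mul_norm_sq_le_inner (sub_pos.mpr hBA) fun x ↦ by
    have := ContinuousLinearMap.sub_norm_sub_mul_norm_sq_le_inner
      (T := toEuclideanCLM (𝕜 := ℝ) B) (hA.mul_norm_sq_le_inner_toEuclideanCLM hc) x
    rwa [← map_sub] at this

theorem norm_sub_le_of_mul_self_sub_mul_self_eq {S T D : Matrix n n ℝ}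
    (hS : S.PosSemidef) (hT : T.PosSemidef) {M : ℝ} (hSM : ‖S‖ ≤ M) (hTM : ‖T‖ ≤ M)
    (hD : T * T - S * S = T * T * D * (S * S)) : ‖T - S‖ ≤ ‖D‖ * M ^ 3 / 2 := by
  have := ContinuousLinearMap.norm_sub_le_of_mul_self_sub_mul_self_eq
    hS.isPositive_toEuclideanCLM hT.isPositive_toEuclideanCLM hSM hTM
    (D := toEuclideanCLM (𝕜 := ℝ) D) (by simp only [← map_mul, ← map_sub, hD])
  rwa [← map_sub] at this

theorem PosDef.norm_sub_le_of_mul_self_eq_inv {A B SA SB : Matrix n n ℝ} (hA : A.PosDef)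
    (hB : IsUnit B) {c : ℝ} (hc0 : 0 < c)
    (hc : ∀ (μ : ℝ) (v : n → ℝ), v ≠ 0 → A *ᵥ v = μ • v → c ≤ μ) (hBA : ‖B - A‖ ≤ c / 2)
    (hSA : SA.PosSemidef) (hSB : SB.PosSemidef) (hSA2 : SA * SA = A⁻¹) (hSB2 : SB * SB = B⁻¹) :
    ‖SB - SA‖ ≤ ‖B - A‖ / c * √(2 / c) := by
  have hA_inv : ‖A⁻¹‖ ≤ 2 / c := by
    have := hA.isHermitian.norm_inv_le_of_norm_sub_lt (B := A) hc (by simpa using hc0)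
    rw [sub_self, norm_zero, sub_zero] at this
    exact this.trans (by rw [inv_eq_one_div]; gcongr; norm_num)
  have hB_inv : ‖B⁻¹‖ ≤ 2 / c :=
    (hA.isHermitian.norm_inv_le_of_norm_sub_lt hc (by linarith)).trans
      (by rw [← one_div, div_le_div_iff₀ (by linarith) hc0]; linarith)
  calc ‖SB - SA‖ ≤ ‖A - B‖ * √(2 / c) ^ 3 / 2 :=
        norm_sub_le_of_mul_self_sub_mul_self_eq hSA hSB
          (Real.le_sqrt_of_sq_le (hSA.isHermitian.isSelfAdjoint.norm_mul_self ▸ hSA2 ▸ hA_inv))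
          (Real.le_sqrt_of_sq_le (hSB.isHermitian.isSelfAdjoint.norm_mul_self ▸ hSB2 ▸ hB_inv))
          (by rw [hSA2, hSB2, inv_sub_inv (iff_of_true hB hA.isUnit)])
    _ = ‖B - A‖ / c * √(2 / c) := by
      rw [norm_sub_rev, pow_succ, Real.sq_sqrt (by positivity)]
      ring

end Matrix

/-- norm bound for the inverse square root perturbation. There is an absolute
constant `C` such that for all symmetric positive definite `A, B` with smallest eigenvalue
`λ_min(A) = lm > 0` and `‖A⁻¹‖ ‖B - A‖ ≤ 1/2`, the positive square roots `SA = A^{-1/2}`,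
`SB = B^{-1/2}` satisfy
`‖SB - SA‖ ≤ C lm^{-1/2} ‖A⁻¹‖ ‖B - A‖ / (1 - ‖A⁻¹‖ ‖B - A‖)`. -/
theorem inverse_sqrt_perturbation_bound :
    ∃ C : ℝ, 0 < C ∧
      ∀ (p : ℕ) (A B SA SB : Matrix (Fin p) (Fin p) ℝ) (lm : ℝ),
        A.PosDef → B.PosDef → A.IsSymm → B.IsSymm → 0 < lm →
        -- `lm` is the smallest eigenvalue of `A`
        (∀ (μ : ℝ) (v : Fin p → ℝ), v ≠ 0 → A.mulVec v = μ • v → lm ≤ μ) →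
        (∃ v : Fin p → ℝ, v ≠ 0 ∧ A.mulVec v = lm • v) →
        -- `SA`, `SB` are the positive square roots of `A⁻¹`, `B⁻¹`
        SA.PosDef → SB.PosDef → SA * SA = A⁻¹ → SB * SB = B⁻¹ →
        ‖A⁻¹‖ * ‖B - A‖ ≤ 1 / 2 →
        ‖SB - SA‖ ≤ C * (Real.sqrt lm)⁻¹ * (‖A⁻¹‖ * ‖B - A‖) / (1 - ‖A⁻¹‖ * ‖B - A‖) := by
  refine ⟨2, two_pos, fun p A B SA SB lm hA hB _ _ hlm hmin hex hSA hSB hSA2 hSB2 hsmall ↦ ?_⟩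
  set a := ‖A⁻¹‖
  set e := ‖B - A‖
  obtain ⟨v, hv, hAv⟩ := hex
  have hlm_a : 1 ≤ lm * a := by
    simpa [abs_of_pos hlm] using one_le_norm_mul_norm_inv_of_mulVec_eq_smul hA.isUnit hv hAv
  have he : e ≤ lm / 2 := by nlinarith [norm_nonneg (B - A)]
  have hsqrt : √(2 / lm) ≤ 2 * (√lm)⁻¹ := by
    rw [Real.sqrt_div' _ hlm.le, div_eq_mul_inv]
    gcongr
    exact Real.sqrt_le_iff.mpr ⟨by norm_num, by norm_num⟩
  calc ‖SB - SA‖ ≤ e / lm * √(2 / lm) :=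
        hA.norm_sub_le_of_mul_self_eq_inv hB.isUnit hlm hmin he hSA.posSemidef hSB.posSemidef hSA2 hSB2
    _ ≤ a * e * (2 * (√lm)⁻¹) := by
      gcongr
      rw [div_le_iff₀ hlm]
      nlinarith [norm_nonneg (B - A)]
    _ = 2 * (√lm)⁻¹ * (a * e) := by ring
    _ ≤ 2 * (√lm)⁻¹ * (a * e) / (1 - a * e) :=
      le_div_self (by positivity) (by linarith)
        (sub_le_self _ (mul_nonneg (norm_nonneg _) (norm_nonneg _)))
end
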